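/- arXiv:1504.02969 — 8 statements merged into one kernel-verified Lean document; each statement's English description precedes it below -/
import Mathlib

section
/- Let Q be a measure on ℝ^[0,∞) such that for all a, b > 0 and all measurable B ⊆ ℝ^[0,∞) one has Q(a⁻¹∘B) + Q(b⁻¹∘B) = Q((a+b)⁻¹∘B) (equality in [0,∞]). Then Q(s∘B) = s⁻¹ Q(B) for all s > 0 and all measurable B ⊆ ℝ^[0,∞). -/
/-!
For fixed measurable `B`, the function `a ↦ Q(a⁻¹∘B)` is additive on `(0,∞)` with values in
`[0,∞]`. Extended by `0` at `0` it is an additive map `ℝ≥0 → ℝ≥0∞`, hence monotone, and squeezing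
`t` between `⌊n t⌋ / n` and `⌈n t⌉ / n` shows that it is linear. Evaluating at `s⁻¹` gives
`Q(s∘B) = s⁻¹ Q(1∘B) = s⁻¹ Q(B)`.
-/

open MeasureTheory ProbabilityTheory
open scoped NNReal ENNReal

noncomputable section

/-- Scaling of the time argument: `(s ∘ f)(t) = f (s t)`. -/
def scaleFun (s : ℝ≥0) (f : ℝ≥0 → ℝ) : ℝ≥0 → ℝ := fun t => f (s * t)

/-- Scaling of a set of paths in `ℝ^[0,∞)`: `s ∘ B = {s ∘ f : f ∈ B}`.
Here `ℝ≥0 → ℝ` carries the cylindrical (product) σ-algebra. -/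
def scaleSet (s : ℝ≥0) (B : Set (ℝ≥0 → ℝ)) : Set (ℝ≥0 → ℝ) := scaleFun s '' B

open Filter Topology

lemma NNReal.tendsto_natFloor_mul_div_atTop (t : ℝ≥0) :
    Tendsto (fun n : ℕ => (⌊t * n⌋₊ / n : ℝ≥0)) atTop (𝓝 t) := by
  rw [← NNReal.tendsto_coe]
  convert (tendsto_nat_floor_mul_div_atTop t.coe_nonneg).comp tendsto_natCast_atTop_atTop
    using 2 with n
  have : ⌊(t : ℝ) * n⌋₊ = ⌊t * n⌋₊ := by exact_mod_cast Nonneg.nat_floor_coe (t * (n : ℝ≥0))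
  simp [this]

lemma NNReal.tendsto_natCeil_mul_div_atTop (t : ℝ≥0) :
    Tendsto (fun n : ℕ => (⌈t * n⌉₊ / n : ℝ≥0)) atTop (𝓝 t) := by
  rw [← NNReal.tendsto_coe]
  convert (tendsto_nat_ceil_mul_div_atTop t.coe_nonneg).comp tendsto_natCast_atTop_atTop
    using 2 with n
  have : ⌈(t : ℝ) * n⌉₊ = ⌈t * n⌉₊ := by exact_mod_cast Nonneg.nat_ceil_coe (t * (n : ℝ≥0))
  simp [this]

theorem AddMonoidHom.apply_nnreal_eq_mul_apply_one (G : ℝ≥0 →+ ℝ≥0∞) (t : ℝ≥0) :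
    G t = t * G 1 := by
  rcases eq_or_ne t 0 with rfl | ht
  · simp
  have hmono : Monotone G := fun a b hab => by
    obtain ⟨d, rfl⟩ := exists_add_of_le hab
    simp only [map_add, le_self_add]
  have hnat (x : ℝ≥0) (k : ℕ) : G (k * x) = k * G x := by
    simpa only [nsmul_eq_mul] using map_nsmul G k x
  have hlim {u : ℕ → ℕ} (hu : Tendsto (fun n : ℕ => (u n / n : ℝ≥0)) atTop (𝓝 t)) :
      Tendsto (fun n : ℕ => (u n / n : ℝ≥0∞) * G 1) atTop (𝓝 (t * G 1)) := by
    refine ENNReal.Tendsto.mul_const ?_ (.inl (ENNReal.coe_ne_zero.2 ht))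
    refine (ENNReal.tendsto_coe.2 hu).congr' ?_
    filter_upwards [eventually_ne_atTop 0] with n hn
    rw [ENNReal.coe_div (by exact_mod_cast hn)]
    simp
  refine le_antisymm (ge_of_tendsto (hlim (NNReal.tendsto_natCeil_mul_div_atTop t)) ?_)
    (le_of_tendsto (hlim (NNReal.tendsto_natFloor_mul_div_atTop t)) ?_)
  · filter_upwards [eventually_ne_atTop 0] with n hn
    rw [← ENNReal.mul_div_right_comm, ENNReal.le_div_iff_mul_le (by simp [hn]) (by simp),
      mul_comm, ← hnat, ← hnat, mul_one, mul_comm]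
    exact hmono (Nat.le_ceil _)
  · filter_upwards with n
    rw [← ENNReal.mul_div_right_comm]
    refine ENNReal.div_le_of_le_mul ?_
    rw [mul_comm _ (n : ℝ≥0∞), ← hnat, ← hnat, mul_one, mul_comm]
    exact hmono (Nat.floor_le (by positivity))

theorem ENNReal.eq_coe_mul_of_add_eq_of_pos (g : ℝ≥0 → ℝ≥0∞)
    (hg : ∀ a b : ℝ≥0, 0 < a → 0 < b → g a + g b = g (a + b)) {t : ℝ≥0} (ht : 0 < t) :
    g t = t * g 1 := by
  let G : ℝ≥0 →+ ℝ≥0∞ :=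
    { toFun := fun a => if a = 0 then 0 else g a
      map_zero' := if_pos rfl
      map_add' := fun a b => by
        rcases eq_or_ne a 0 with rfl | ha
        · simp
        rcases eq_or_ne b 0 with rfl | hb
        · simp
        simp [ha, hb, ← hg a b (pos_iff_ne_zero.2 ha) (pos_iff_ne_zero.2 hb)] }
  simpa [G, ht.ne'] using G.apply_nnreal_eq_mul_apply_one t

lemma scaleSet_one (B : Set (ℝ≥0 → ℝ)) : scaleSet 1 B = B := by
  have hid : scaleFun 1 = id := funext fun f => funext fun t => by simp [scaleFun]
  rw [scaleSet, hid, Set.image_id]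

/-- If a measure `Q` on `ℝ^[0,∞)` satisfies
`Q(a⁻¹∘B) + Q(b⁻¹∘B) = Q((a+b)⁻¹∘B)` for all `a, b > 0` and measurable `B`, then
`Q(s∘B) = s⁻¹ Q(B)` for all `s > 0` and measurable `B`. -/
theorem statement2 (Q : Measure (ℝ≥0 → ℝ))
    (h : ∀ a b : ℝ≥0, 0 < a → 0 < b → ∀ B : Set (ℝ≥0 → ℝ), MeasurableSet B →
      Q (scaleSet a⁻¹ B) + Q (scaleSet b⁻¹ B) = Q (scaleSet (a + b)⁻¹ B)) :
    ∀ s : ℝ≥0, 0 < s → ∀ B : Set (ℝ≥0 → ℝ), MeasurableSet B →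
      Q (scaleSet s B) = (s : ℝ≥0∞)⁻¹ * Q B := by
  intro s hs B hB
  have hlin := ENNReal.eq_coe_mul_of_add_eq_of_pos (fun a => Q (scaleSet a⁻¹ B))
    (fun a b ha hb => h a b ha hb B hB) (inv_pos.2 hs)
  simpa [scaleSet_one, ENNReal.coe_inv hs.ne'] using hlin
end
end

section
/- Let σ be a probability measure on D'₀ and define Q(B) = ∫₀^∞ σ(t∘B) dt. Then for every t > 0, ∫ min(1, f(t)²) Q(df) = t · ∫_{D'₀} ∫₀^∞ min(1, g(u)²) u⁻² du σ(dg). In particular, ∫ min(1, f(t)²) Q(df) < ∞ for all t ≥ 0 if and only if ∫_{D'₀} ∫₀^∞ min(1, g(u)²) u⁻² du σ(dg) < ∞. -/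
/-!
Write `Φ (t, g) = t⁻¹ ∘ g`. Since `t ∘ B = Φ (t, ·)⁻¹ B`, the definition of `Q` says that `Q` is
the image of `Leb|(0,∞) ⊗ σ` under `Φ`, so by Tonelli
`∫ φ (f t₀) Q(df) = ∫ ∫₀^∞ φ (g (t₀ / t)) dt σ(dg)`, and the substitution `u = t₀ / t`, `dt = t₀ u⁻² du` turns the inner integral into
`t₀ ∫₀^∞ φ (g u) u⁻² du`. The one technical point is the joint measurability of `(u, g) ↦ g u` for
the cylindrical σ-algebra: it holds because paths are right-continuous, so that `g u` is the limit
of `g` at the dyadic points `⌈2ⁿ u⌉ / 2ⁿ`.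
-/

open MeasureTheory ProbabilityTheory
open scoped NNReal ENNReal

noncomputable section

/-- A function on `[0,∞)` is càdlàg if it is right-continuous everywhere and has left
limits at every positive time. -/
def Cadlag (f : ℝ≥0 → ℝ) : Prop :=
  (∀ t : ℝ≥0, ContinuousWithinAt f (Set.Ici t) t) ∧
  (∀ t : ℝ≥0, 0 < t → ∃ l : ℝ, Filter.Tendsto f (nhdsWithin t (Set.Iio t)) (nhds l))

/-- `D'₀`: the family of càdlàg functions on `[0,∞)` vanishing at the origin and not
identically zero, equipped with the trace of the cylindrical (product) σ-algebra. -/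
abbrev Dzero : Type := {f : ℝ≥0 → ℝ // Cadlag f ∧ f 0 = 0 ∧ f ≠ 0}

/-- Scaling of a set of paths in `D'₀`: `s ∘ B = {s ∘ f : f ∈ B}`. -/
def scaleSetD (s : ℝ≥0) (B : Set Dzero) : Set Dzero :=
  {g : Dzero | ∃ f ∈ B, (g : ℝ≥0 → ℝ) = scaleFun s (f : ℝ≥0 → ℝ)}

open Set Filter Topology TopologicalSpace

section RightContinuous

variable {Ω E : Type*} [MeasurableSpace Ω] [TopologicalSpace E] [PseudoMetrizableSpace E]
  [MeasurableSpace E] [BorelSpace E]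

def dyadicCeil (n : ℕ) (u : ℝ≥0) : ℝ≥0 := ⌈u * 2 ^ n⌉₊ / 2 ^ n

lemma le_dyadicCeil (n : ℕ) (u : ℝ≥0) : u ≤ dyadicCeil n u := by
  rw [dyadicCeil, le_div_iff₀ (by positivity)]
  exact Nat.le_ceil _

lemma dyadicCeil_le (n : ℕ) (u : ℝ≥0) : dyadicCeil n u ≤ u + (2 ^ n)⁻¹ := by
  rw [dyadicCeil, div_le_iff₀ (by positivity), add_mul, inv_mul_cancel₀ (by positivity)]
  exact (Nat.ceil_lt_add_one (by positivity)).le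

lemma tendsto_dyadicCeil (u : ℝ≥0) : Tendsto (dyadicCeil · u) atTop (𝓝[≥] u) := by
  refine tendsto_nhdsWithin_iff.2 ⟨?_, .of_forall (le_dyadicCeil · u)⟩
  have h : Tendsto (fun n : ℕ => u + ((2 : ℝ≥0) ^ n)⁻¹) atTop (𝓝 u) := by
    simpa [← inv_pow] using tendsto_const_nhds.add
      (NNReal.tendsto_pow_atTop_nhds_zero_of_lt_one (inv_lt_one_of_one_lt₀ one_lt_two))
  exact tendsto_of_tendsto_of_tendsto_of_le_of_le tendsto_const_nhds h (le_dyadicCeil · u)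
    (dyadicCeil_le · u)

theorem measurable_uncurry_of_continuousWithinAt_Ici {X : Ω → ℝ≥0 → E}
    (hX : ∀ t, Measurable fun ω => X ω t) (hrc : ∀ ω t, ContinuousWithinAt (X ω) (Ici t) t) :
    Measurable fun p : ℝ≥0 × Ω => X p.2 p.1 := by
  refine measurable_of_tendsto_metrizable (f := fun n p => X p.2 (dyadicCeil n p.1)) (fun n => ?_)
    (tendsto_pi_nhds.2 fun p => ?_)
  · have hgrid : Measurable fun q : ℕ × Ω => X q.2 (q.1 / 2 ^ n) :=
      measurable_from_prod_countable_right fun k => hX ((k : ℝ≥0) / 2 ^ n)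
    exact hgrid.comp ((measurable_fst.mul_const _).nat_ceil.prodMk measurable_snd)
  · exact (hrc p.2 p.1).tendsto.comp (tendsto_dyadicCeil p.1)

end RightContinuous

theorem lintegral_Ioi_comp_div {c : ℝ} (hc : 0 < c) (h : ℝ → ℝ≥0∞) :
    ∫⁻ t in Ioi 0, h (c / t) = ENNReal.ofReal c * ∫⁻ u in Ioi 0, h u / ENNReal.ofReal (u ^ 2) := by
  have hinv : ∀ x, c / (c / x) = x := fun x => div_div_cancel₀ hc.ne'
  have himage : (c / ·) '' Ioi 0 = Ioi (0 : ℝ) :=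
    Subset.antisymm (image_subset_iff.2 fun x hx => div_pos hc hx)
      fun x hx => ⟨c / x, div_pos hc hx, hinv x⟩
  have hinj : InjOn (c / ·) (Ioi (0 : ℝ)) := fun a _ b _ hab => by
    rw [← hinv a, ← hinv b]; exact congrArg (c / ·) hab
  have hderiv : ∀ x ∈ Ioi (0 : ℝ), HasDerivWithinAt (c / ·) (-(c / x ^ 2)) (Ioi 0) x := fun x hx =>
    by simpa [div_eq_mul_inv] using ((hasDerivAt_inv (ne_of_gt hx)).const_mul c).hasDerivWithinAt
  have hsubst := lintegral_image_eq_lintegral_abs_deriv_mul measurableSet_Ioi hderiv hinj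
    fun t => h (c / t)
  rw [himage] at hsubst
  rw [hsubst, ← lintegral_const_mul' _ _ ENNReal.ofReal_ne_top]
  refine setLIntegral_congr_fun measurableSet_Ioi fun x hx => ?_
  rw [hinv, abs_neg, abs_of_pos (div_pos hc (pow_pos hx 2)),
    ENNReal.ofReal_div_of_pos (pow_pos hx 2),
    ENNReal.div_eq_inv_mul, ENNReal.div_eq_inv_mul]
  ring

lemma scaleFun_scaleFun (a b : ℝ≥0) (f : ℝ≥0 → ℝ) :
    scaleFun a (scaleFun b f) = scaleFun (b * a) f := by
  funext t; simp [scaleFun, mul_assoc]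

@[simp]
lemma scaleFun_one (f : ℝ≥0 → ℝ) : scaleFun 1 f = f := by
  funext t; simp [scaleFun]

lemma scaleFun_inv_scaleFun {s : ℝ≥0} (hs : s ≠ 0) (f : ℝ≥0 → ℝ) :
    scaleFun s⁻¹ (scaleFun s f) = f := by
  rw [scaleFun_scaleFun, mul_inv_cancel₀ hs, scaleFun_one]

lemma Cadlag.scaleFun {f : ℝ≥0 → ℝ} (hf : Cadlag f) {s : ℝ≥0} (hs : 0 < s) :
    Cadlag (scaleFun s f) := by
  have hmul : Continuous fun t : ℝ≥0 => s * t := continuous_const.mul continuous_id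
  refine ⟨fun t => (hf.1 (s * t)).comp hmul.continuousWithinAt fun u hu => mul_le_mul_right hu s,
    fun t ht => ?_⟩
  obtain ⟨l, hl⟩ := hf.2 (s * t) (mul_pos hs ht)
  exact ⟨l, hl.comp (hmul.continuousWithinAt.tendsto_nhdsWithin
    fun u hu => mul_lt_mul_of_pos_left hu hs)⟩

lemma scaleFun_ne_zero {f : ℝ≥0 → ℝ} (hf : f ≠ 0) {s : ℝ≥0} (hs : s ≠ 0) : scaleFun s f ≠ 0 :=
  fun h => hf <| by rw [← scaleFun_inv_scaleFun hs f, h]; rfl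

/-- `s ∘ g` for `s ≠ 0`; the junk value `scaleD 0 g = g` replaces `0 ∘ g = 0 ∉ D'₀`. -/
def scaleD (s : ℝ≥0) (g : Dzero) : Dzero :=
  if hs : s = 0 then g
  else ⟨scaleFun s g, g.2.1.scaleFun (pos_iff_ne_zero.2 hs), by simp [scaleFun, g.2.2.1],
    scaleFun_ne_zero g.2.2.2 hs⟩

lemma coe_scaleD {s : ℝ≥0} (hs : s ≠ 0) (g : Dzero) : (scaleD s g : ℝ≥0 → ℝ) = scaleFun s g := by
  rw [scaleD, dif_neg hs]

lemma scaleD_apply (s : ℝ≥0) (g : Dzero) (u : ℝ≥0) :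
    (scaleD s g : ℝ≥0 → ℝ) u = (g : ℝ≥0 → ℝ) (if s = 0 then u else s * u) := by
  by_cases hs : s = 0
  · simp [scaleD, hs]
  · rw [coe_scaleD hs, if_neg hs]; rfl

lemma scaleSetD_eq_preimage {s : ℝ≥0} (hs : s ≠ 0) (B : Set Dzero) :
    scaleSetD s B = scaleD s⁻¹ ⁻¹' B := by
  have hs' : s⁻¹ ≠ 0 := inv_ne_zero hs
  ext g
  constructor
  · rintro ⟨f, hf, hgf⟩
    show scaleD s⁻¹ g ∈ B
    convert hf
    ext1
    rw [coe_scaleD hs', hgf, scaleFun_scaleFun, mul_inv_cancel₀ hs, scaleFun_one]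
  · intro hg
    refine ⟨scaleD s⁻¹ g, hg, ?_⟩
    rw [coe_scaleD hs', scaleFun_scaleFun, inv_mul_cancel₀ hs, scaleFun_one]

lemma measurable_dzero_eval (u : ℝ≥0) : Measurable fun g : Dzero => (g : ℝ≥0 → ℝ) u :=
  (measurable_pi_apply u).comp measurable_subtype_coe

lemma measurable_scaleD_uncurry {α : Type*} [MeasurableSpace α] {c : α → ℝ≥0}
    (hc : Measurable c) : Measurable fun p : α × Dzero => scaleD (c p.1) p.2 := by
  have hpath := measurable_uncurry_of_continuousWithinAt_Ici measurable_dzero_eval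
    fun (g : Dzero) => g.2.1.1
  have hc' : Measurable fun p : α × Dzero => c p.1 := hc.comp measurable_fst
  have hcoe : Measurable fun p : α × Dzero => (scaleD (c p.1) p.2 : ℝ≥0 → ℝ) := by
    refine measurable_pi_lambda _ fun u => ?_
    simp_rw [scaleD_apply]
    exact hpath.comp <| (Measurable.ite (hc' (measurableSet_singleton 0)) measurable_const
      (hc'.mul_const u)).prodMk measurable_snd
  exact hcoe.subtype_mk

lemma eq_map_prod_scaleD (σ Q : Measure Dzero) [SFinite σ]
    (hQ : ∀ B : Set Dzero, MeasurableSet B →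
      Q B = ∫⁻ t in Ioi (0 : ℝ), σ (scaleSetD t.toNNReal B)) :
    Q = ((volume.restrict (Ioi (0 : ℝ))).prod σ).map fun p => scaleD p.1.toNNReal⁻¹ p.2 := by
  have hΦ := measurable_scaleD_uncurry (c := fun t : ℝ => t.toNNReal⁻¹)
    measurable_real_toNNReal.inv
  ext B hB
  rw [Measure.map_apply hΦ hB, Measure.prod_apply (hΦ hB), hQ B hB]
  refine setLIntegral_congr_fun measurableSet_Ioi fun t ht => ?_
  rw [scaleSetD_eq_preimage (Real.toNNReal_pos.2 ht).ne']
  rfl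

theorem lintegral_comp_eval_eq (σ Q : Measure Dzero) [SFinite σ]
    (hQ : ∀ B : Set Dzero, MeasurableSet B →
      Q B = ∫⁻ t in Ioi (0 : ℝ), σ (scaleSetD t.toNNReal B))
    {φ : ℝ → ℝ≥0∞} (hφ : Measurable φ) {t₀ : ℝ≥0} (ht₀ : 0 < t₀) :
    ∫⁻ f : Dzero, φ ((f : ℝ≥0 → ℝ) t₀) ∂Q
      = t₀ * ∫⁻ g : Dzero,
          (∫⁻ u in Ioi (0 : ℝ), φ ((g : ℝ≥0 → ℝ) u.toNNReal) / ENNReal.ofReal (u ^ 2)) ∂σ := by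
  have hΦ := measurable_scaleD_uncurry (c := fun t : ℝ => t.toNNReal⁻¹)
    measurable_real_toNNReal.inv
  have hF : Measurable fun f : Dzero => φ ((f : ℝ≥0 → ℝ) t₀) :=
    hφ.comp (measurable_dzero_eval t₀)
  rw [eq_map_prod_scaleD σ Q hQ, lintegral_map hF hΦ,
    lintegral_prod_symm' (fun p : ℝ × Dzero => φ ((scaleD p.1.toNNReal⁻¹ p.2 : ℝ≥0 → ℝ) t₀))
      (hF.comp hΦ), ← lintegral_const_mul' _ _ ENNReal.coe_ne_top]
  refine lintegral_congr fun g => ?_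
  calc ∫⁻ t in Ioi (0 : ℝ), φ ((scaleD t.toNNReal⁻¹ g : ℝ≥0 → ℝ) t₀)
      = ∫⁻ t in Ioi (0 : ℝ), φ ((g : ℝ≥0 → ℝ) (t₀ / t).toNNReal) := by
        refine setLIntegral_congr_fun measurableSet_Ioi fun t ht => ?_
        rw [scaleD_apply, if_neg (inv_ne_zero (Real.toNNReal_pos.2 ht).ne'),
          Real.toNNReal_div t₀.coe_nonneg, Real.toNNReal_coe, div_eq_inv_mul]
    _ = _ := by
        rw [lintegral_Ioi_comp_div (NNReal.coe_pos.2 ht₀) fun u => φ ((g : ℝ≥0 → ℝ) u.toNNReal),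
          ENNReal.ofReal_coe_nnreal]

lemma lintegral_min_one_sq_eval_eq (σ Q : Measure Dzero) [SFinite σ]
    (hQ : ∀ B : Set Dzero, MeasurableSet B →
      Q B = ∫⁻ t in Ioi (0 : ℝ), σ (scaleSetD t.toNNReal B))
    {t : ℝ≥0} (ht : 0 < t) :
    ∫⁻ f : Dzero, ENNReal.ofReal (min 1 (((f : ℝ≥0 → ℝ) t) ^ 2)) ∂Q
      = t * ∫⁻ g : Dzero,
          (∫⁻ u in Ioi (0 : ℝ),
            ENNReal.ofReal (min 1 (((g : ℝ≥0 → ℝ) u.toNNReal) ^ 2) / u ^ 2)) ∂σ := by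
  rw [lintegral_comp_eval_eq σ Q hQ (φ := fun x => ENNReal.ofReal (min 1 (x ^ 2))) (by fun_prop) ht]
  congr 1
  refine lintegral_congr fun g => setLIntegral_congr_fun measurableSet_Ioi fun u hu => ?_
  rw [ENNReal.ofReal_div_of_pos (pow_pos hu 2)]

/-- Let `σ` be a probability measure on `D'₀` and let `Q` be the measure with
`Q(B) = ∫₀^∞ σ(t∘B) dt`. Then for every `t > 0`,
`∫ min(1, f(t)²) Q(df) = t · ∫∫ min(1, g(u)²) u⁻² du σ(dg)`; in particular, the left-hand
side is finite for all `t ≥ 0` iff the double integral is finite. -/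
theorem statement3 (σ : Measure Dzero) [IsProbabilityMeasure σ] (Q : Measure Dzero)
    (hQ : ∀ B : Set Dzero, MeasurableSet B →
      Q B = ∫⁻ t in Set.Ioi (0 : ℝ), σ (scaleSetD t.toNNReal B)) :
    (∀ t : ℝ≥0, 0 < t →
      ∫⁻ f : Dzero, ENNReal.ofReal (min 1 (((f : ℝ≥0 → ℝ) t) ^ 2)) ∂Q
        = (t : ℝ≥0∞) * ∫⁻ g : Dzero,
            (∫⁻ u in Set.Ioi (0 : ℝ),
              ENNReal.ofReal (min 1 (((g : ℝ≥0 → ℝ) u.toNNReal) ^ 2) / u ^ 2)) ∂σ) ∧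
    ((∀ t : ℝ≥0, ∫⁻ f : Dzero, ENNReal.ofReal (min 1 (((f : ℝ≥0 → ℝ) t) ^ 2)) ∂Q ≠ ⊤) ↔
      (∫⁻ g : Dzero,
        (∫⁻ u in Set.Ioi (0 : ℝ),
          ENNReal.ofReal (min 1 (((g : ℝ≥0 → ℝ) u.toNNReal) ^ 2) / u ^ 2)) ∂σ) ≠ ⊤) := by
  have key := fun t (ht : 0 < t) => lintegral_min_one_sq_eval_eq σ Q hQ ht
  refine ⟨key, fun h => ?_, fun h t => ?_⟩
  · simpa only [key 1 one_pos, ENNReal.coe_one, one_mul] using h 1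
  · rcases eq_or_ne t 0 with rfl | ht
    · simp [fun f : Dzero => f.2.2.1]
    · rw [key t (pos_iff_ne_zero.2 ht)]
      exact ENNReal.mul_ne_top ENNReal.coe_ne_top h
end
end

section
/- Let (εᵢ)_{i≥1} be i.i.d. copies of a random element ε of D'₀, independent of (Γᵢ)_{i≥1}, the successive points of a unit-intensity homogeneous Poisson process on [0,∞). Assume E ∫₀^∞ min(1, |ε(t)|) t⁻² dt < ∞. Then for every t ≥ 0, the series ∑_{i=1}^∞ εᵢ(Γᵢ⁻¹ t) converges absolutely almost surely (i.e. ∑_{i=1}^∞ |εᵢ(Γᵢ⁻¹ t)| < ∞ a.s.). -/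
/-!
Write `φ(x) = min(1, |x|)`. The series `∑ εᵢ(t / Γᵢ)` converges absolutely as soon as
`∑ φ(εᵢ(t / Γᵢ)) < ∞`, so it suffices to show that the latter series has finite expectation.
Conditioning on `Γᵢ`, which is independent of `εᵢ`, gives `E φ(εᵢ(t / Γᵢ)) = E m(t / Γᵢ)` with
`m(q) = E φ(ε(q))`. As `Γᵢ` has the law `Γ(i + 1, 1)` and these densities sum to `1` on `(0, ∞)`
(the Poisson probabilities), `∑ᵢ E m(t / Γᵢ) = ∫₀^∞ m(t / s) ds = t ∫₀^∞ m(x) x⁻² dx`, which is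
`t E ∫₀^∞ φ(ε(x)) x⁻² dx < ∞`.

The product σ-algebra does not make `(q, f) ↦ f q` measurable, so evaluating `εᵢ` at the random
time `t / Γᵢ` is handled through right-continuity: `f q` is the limit of `f` along the dyadic
points `⌈q 2ⁿ⌉ / 2ⁿ`, which range over a countable set.
-/

open MeasureTheory ProbabilityTheory
open scoped NNReal ENNReal

noncomputable section

/-- `Γᵢ = E₀ + ⋯ + Eᵢ`, the successive points of the unit-intensity Poisson process built
from the interarrival times `E`. -/
def gammaPt {Ω : Type*} (E : ℕ → Ω → ℝ) (i : ℕ) (ω : Ω) : ℝ :=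
  ∑ j ∈ Finset.range (i + 1), E j ω

open Filter Topology Set

lemma tendsto_nat_ceil_mul_two_pow_div (q : ℝ≥0) :
    Tendsto (fun n : ℕ => (⌈q * 2 ^ n⌉₊ : ℝ≥0) / 2 ^ n) atTop (𝓝[≥] q) := by
  have hpos (n : ℕ) : (0 : ℝ≥0) < 2 ^ n := by positivity
  have hle (n : ℕ) : q ≤ (⌈q * 2 ^ n⌉₊ : ℝ≥0) / 2 ^ n :=
    (le_div_iff₀ (hpos n)).2 (Nat.le_ceil _)
  have hge (n : ℕ) : (⌈q * 2 ^ n⌉₊ : ℝ≥0) / 2 ^ n ≤ q + (2 ^ n)⁻¹ := by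
    rw [div_le_iff₀ (hpos n), add_mul, inv_mul_cancel₀ (hpos n).ne']
    exact (Nat.ceil_lt_add_one zero_le).le
  have hlim : Tendsto (fun n : ℕ => q + ((2 : ℝ≥0) ^ n)⁻¹) atTop (𝓝 q) := by
    simpa [← inv_pow] using tendsto_const_nhds.add
      (NNReal.tendsto_pow_atTop_nhds_zero_of_lt_one (r := 2⁻¹) (by norm_num))
  exact tendsto_nhdsWithin_iff.2
    ⟨tendsto_of_tendsto_of_tendsto_of_le_of_le tendsto_const_nhds hlim hle hge,
      Eventually.of_forall hle⟩

lemma exists_measurable_eq_comp_eval {g : ℝ → ℝ≥0∞} (hg : Continuous g) :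
    ∃ G : ℝ≥0 × (ℝ≥0 → ℝ) → ℝ≥0∞, Measurable G ∧
      ∀ q f, ContinuousWithinAt f (Ici q) q → G (q, f) = g (f q) := by
  set d : ℕ → ℝ≥0 → ℝ≥0 := fun n q => (⌈q * 2 ^ n⌉₊ : ℝ≥0) / 2 ^ n
  refine ⟨fun p => liminf (fun n => g (p.2 (d n p.1))) atTop, ?_, fun q f hf => ?_⟩
  · refine Measurable.liminf fun n => hg.measurable.comp ?_
    have hgrid : Measurable fun p : (ℝ≥0 → ℝ) × ℕ => p.1 ((p.2 : ℝ≥0) / 2 ^ n) :=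
      measurable_from_prod_countable_left fun k => measurable_pi_apply ((k : ℝ≥0) / 2 ^ n)
    exact hgrid.comp (measurable_snd.prodMk
      (Nat.measurable_ceil.comp (measurable_fst.mul_const _)))
  · exact ((hg.tendsto _).comp (hf.tendsto.comp (tendsto_nat_ceil_mul_two_pow_div q))).liminf_eq

section RandomEvaluation

variable {Ω : Type*} [MeasurableSpace Ω] {P : Measure Ω} {ξ : Ω → ℝ≥0 → ℝ} {g : ℝ → ℝ≥0∞}

lemma exists_measurable_ae_eq_comp_eval (hg : Continuous g)
    (hrc : ∀ᵐ ω ∂P, ∀ q, ContinuousWithinAt (ξ ω) (Ici q) q) :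
    ∃ G : ℝ≥0 × (ℝ≥0 → ℝ) → ℝ≥0∞, Measurable G ∧ ∀ᵐ ω ∂P, ∀ q, G (q, ξ ω) = g (ξ ω q) := by
  obtain ⟨G, hG, hGg⟩ := exists_measurable_eq_comp_eval hg
  exact ⟨G, hG, hrc.mono fun ω hω q => hGg q _ (hω q)⟩

lemma aemeasurable_comp_eval (hg : Continuous g) (hξ : Measurable ξ)
    (hrc : ∀ᵐ ω ∂P, ∀ q, ContinuousWithinAt (ξ ω) (Ici q) q)
    {U : Ω → ℝ≥0} (hU : Measurable U) :
    AEMeasurable (fun ω => g (ξ ω (U ω))) P := by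
  obtain ⟨G, hG, hGg⟩ := exists_measurable_ae_eq_comp_eval hg hrc
  exact (hG.comp (hU.prodMk hξ)).aemeasurable.congr (hGg.mono fun ω hω => hω (U ω))

lemma measurable_lintegral_comp_eval [SFinite P] (hg : Continuous g) (hξ : Measurable ξ)
    (hrc : ∀ᵐ ω ∂P, ∀ q, ContinuousWithinAt (ξ ω) (Ici q) q) :
    Measurable fun q => ∫⁻ ω, g (ξ ω q) ∂P := by
  obtain ⟨G, hG, hGg⟩ := exists_measurable_ae_eq_comp_eval hg hrc
  have hGq (q : ℝ≥0) : ∫⁻ ω, G (q, ξ ω) ∂P = ∫⁻ ω, g (ξ ω q) ∂P :=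
    lintegral_congr_ae (hGg.mono fun ω hω => hω q)
  have hGmeas : Measurable fun q => ∫⁻ ω, G (q, ξ ω) ∂P :=
    (hG.comp (measurable_fst.prodMk (hξ.comp measurable_snd))).lintegral_prod_right'
  simpa only [hGq] using hGmeas

lemma lintegral_comp_eval_of_indepFun [IsFiniteMeasure P] (hg : Continuous g)
    (hξ : Measurable ξ) (hrc : ∀ᵐ ω ∂P, ∀ q, ContinuousWithinAt (ξ ω) (Ici q) q)
    {U : Ω → ℝ≥0} (hU : Measurable U) (hind : IndepFun U ξ P) :
    ∫⁻ ω, g (ξ ω (U ω)) ∂P = ∫⁻ ω, (∫⁻ ω', g (ξ ω' (U ω)) ∂P) ∂P := by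
  obtain ⟨G, hG, hGg⟩ := exists_measurable_ae_eq_comp_eval hg hrc
  have hGq (q : ℝ≥0) : ∫⁻ ω', G (q, ξ ω') ∂P = ∫⁻ ω', g (ξ ω' q) ∂P :=
    lintegral_congr_ae (hGg.mono fun ω hω => hω q)
  have hprod := (indepFun_iff_map_prod_eq_prod_map_map hU.aemeasurable hξ.aemeasurable).1 hind
  calc ∫⁻ ω, g (ξ ω (U ω)) ∂P = ∫⁻ ω, G (U ω, ξ ω) ∂P :=
        lintegral_congr_ae (hGg.mono fun ω hω => (hω (U ω)).symm)
    _ = ∫⁻ p, G p ∂((P.map U).prod (P.map ξ)) := by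
        rw [← hprod, lintegral_map hG (hU.prodMk hξ)]
    _ = ∫⁻ q, ∫⁻ ω', G (q, ξ ω') ∂P ∂(P.map U) := by
        rw [lintegral_prod _ hG.aemeasurable]
        congr! 2 with q
        exact lintegral_map (hG.comp measurable_prodMk_left) hξ
    _ = ∫⁻ ω, (∫⁻ ω', g (ξ ω' (U ω)) ∂P) ∂P := by
        simp only [hGq]
        exact lintegral_map (measurable_lintegral_comp_eval hg hξ hrc) hU

lemma lintegral_mul_lintegral_comp_eval_swap [SFinite P] (hg : Continuous g) (hξ : Measurable ξ)
    (hrc : ∀ᵐ ω ∂P, ∀ q, ContinuousWithinAt (ξ ω) (Ici q) q)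
    {α : Type*} [MeasurableSpace α] {ν : Measure α} [SFinite ν] {κ : α → ℝ≥0} (hκ : Measurable κ)
    {w : α → ℝ≥0∞} (hw : Measurable w) :
    ∫⁻ x, w x * ∫⁻ ω, g (ξ ω (κ x)) ∂P ∂ν = ∫⁻ ω, ∫⁻ x, w x * g (ξ ω (κ x)) ∂ν ∂P := by
  obtain ⟨G, hG, hGg⟩ := exists_measurable_ae_eq_comp_eval hg hrc
  have hGx (x : α) : ∫⁻ ω, G (κ x, ξ ω) ∂P = ∫⁻ ω, g (ξ ω (κ x)) ∂P :=
    lintegral_congr_ae (hGg.mono fun ω hω => hω (κ x))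
  have hGmeas : Measurable fun p : α × Ω => w p.1 * G (κ p.1, ξ p.2) :=
    (hw.comp measurable_fst).mul
      (hG.comp ((hκ.comp measurable_fst).prodMk (hξ.comp measurable_snd)))
  calc ∫⁻ x, w x * ∫⁻ ω, g (ξ ω (κ x)) ∂P ∂ν = ∫⁻ x, ∫⁻ ω, w x * G (κ x, ξ ω) ∂P ∂ν := by
        refine lintegral_congr fun x => ?_
        rw [← hGx]
        exact (lintegral_const_mul _ (hG.comp (measurable_const.prodMk hξ))).symm
    _ = ∫⁻ ω, ∫⁻ x, w x * G (κ x, ξ ω) ∂ν ∂P := lintegral_lintegral_swap hGmeas.aemeasurable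
    _ = ∫⁻ ω, ∫⁻ x, w x * g (ξ ω (κ x)) ∂ν ∂P :=
        lintegral_congr_ae (hGg.mono fun ω hω => by simp only [hω])

end RandomEvaluation

section ErlangLaw

open Real
open scoped Nat

lemma gammaPDF_lconvolution_gammaPDF_one {a r : ℝ} (ha : 0 < a) (hr : 0 < r) :
    gammaPDF a r ⋆ₗ gammaPDF 1 r = gammaPDF (a + 1) r := by
  ext x
  set c := r ^ (a + 1) / Gamma a * exp (-(r * x))
  have hprod (y : ℝ) : gammaPDF a r y * gammaPDF 1 r (-y + x)
      = (Icc 0 x).indicator (fun y => ENNReal.ofReal (c * y ^ (a - 1))) y := by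
    by_cases hy : y ∈ Icc 0 x
    · have hΓ := Gamma_pos_of_pos ha
      have hya := rpow_nonneg hy.1 (a - 1)
      rw [indicator_of_mem hy, gammaPDF_of_nonneg hy.1, gammaPDF_of_nonneg (by linarith [hy.2]),
        ← ENNReal.ofReal_mul (by positivity)]
      congr 1
      simp only [c, rpow_add_one hr.ne', sub_self, rpow_zero, rpow_one, Gamma_one]
      rw [show -(r * x) = -(r * y) + -(r * (-y + x)) by ring, exp_add]
      ring
    · rw [indicator_of_notMem hy]
      rcases not_and_or.1 hy with hy | hy
      · rw [gammaPDF_of_neg (not_le.1 hy), zero_mul]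
      · rw [gammaPDF_of_neg (x := -y + x) (by linarith [not_le.1 hy]), mul_zero]
  rw [lconvolution_def, lintegral_congr hprod, lintegral_indicator measurableSet_Icc]
  rcases lt_or_ge x 0 with hx | hx
  · simp [Icc_eq_empty_of_lt hx, gammaPDF_of_neg hx]
  have hint : IntervalIntegrable (fun y => c * y ^ (a - 1)) volume 0 x :=
    (intervalIntegral.intervalIntegrable_rpow' (by linarith)).const_mul c
  rw [← ofReal_integral_eq_lintegral_ofReal
      ((intervalIntegrable_iff_integrableOn_Icc_of_le hx).1 hint)
      ((ae_restrict_iff' measurableSet_Icc).2 (Eventually.of_forall fun y hy =>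
        mul_nonneg (by positivity) (rpow_nonneg hy.1 _))),
    integral_Icc_eq_integral_Ioc, ← intervalIntegral.integral_of_le hx,
    intervalIntegral.integral_const_mul, integral_rpow (Or.inl (by linarith)),
    gammaPDF_of_nonneg hx]
  congr 1
  simp only [c, sub_add_cancel, add_sub_cancel_right, zero_rpow ha.ne', sub_zero,
    Gamma_add_one ha.ne']
  field_simp

lemma gammaMeasure_conv_expMeasure {a r : ℝ} (ha : 0 < a) (hr : 0 < r) :
    gammaMeasure a r ∗ expMeasure r = gammaMeasure (a + 1) r := by
  have hmeas (b : ℝ) : Measurable (gammaPDF b r) := (measurable_gammaPDFReal b r).ennreal_ofReal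
  rw [expMeasure, gammaMeasure, gammaMeasure, gammaMeasure,
    conv_withDensity_eq_lconvolution (hmeas a) (hmeas 1),
    gammaPDF_lconvolution_gammaPDF_one ha hr]

lemma tsum_gammaPDF_nat_succ_one (x : ℝ) :
    ∑' n : ℕ, gammaPDF (n + 1) 1 x = (Ici 0).indicator 1 x := by
  rcases lt_or_ge x 0 with hx | hx
  · simp [gammaPDF_of_neg hx, hx]
  have hterm (n : ℕ) : gammaPDF (n + 1) 1 x
      = ENNReal.ofReal (exp (-x.toNNReal) * x.toNNReal ^ n / n !) := by
    rw [gammaPDF_of_nonneg hx, Real.coe_toNNReal x hx, add_sub_cancel_right, rpow_natCast,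
      Gamma_nat_eq_factorial, one_rpow]
    ring_nf
  rw [tsum_congr hterm, ← ENNReal.ofReal_tsum_of_nonneg (fun n => by positivity)
    (hasSum_one_poissonMeasure _).summable, (hasSum_one_poissonMeasure _).tsum_eq]
  simp [hx]

end ErlangLaw

section PoissonPoints

open Real

variable {Ω : Type*} [MeasurableSpace Ω] {P : Measure Ω}

lemma map_eq_expMeasure_of_tail [IsProbabilityMeasure P] {X : Ω → ℝ} (hX : Measurable X)
    {r : ℝ} (hr : 0 < r)
    (htail : ∀ t, 0 ≤ t → P {ω | t < X ω} = ENNReal.ofReal (exp (-(r * t)))) :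
    P.map X = expMeasure r := by
  have := isProbabilityMeasure_expMeasure hr
  have := Measure.isProbabilityMeasure_map (μ := P) hX.aemeasurable
  have hcdf (t : ℝ) (ht : 0 ≤ t) : P.map X (Iic t) = 1 - ENNReal.ofReal (exp (-(r * t))) := by
    rw [Measure.map_apply hX measurableSet_Iic, ← htail t ht,
      ← prob_compl_eq_one_sub (measurableSet_lt measurable_const hX)]
    congr 1
    ext ω
    simp
  refine Measure.ext_of_Iic _ _ fun t => ?_
  rw [← ofReal_cdf (expMeasure r), cdf_expMeasure_eq hr]
  split_ifs with ht
  · rw [hcdf t ht, ENNReal.ofReal_sub _ (exp_pos _).le, ENNReal.ofReal_one]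
  · rw [ENNReal.ofReal_zero]
    refine le_antisymm ?_ zero_le
    calc P.map X (Iic t) ≤ P.map X (Iic 0) := measure_mono (Iic_subset_Iic.2 (not_le.1 ht).le)
      _ = 0 := by simp [hcdf 0 le_rfl]

lemma measurable_gammaPt {E : ℕ → Ω → ℝ} (hE : ∀ i, Measurable (E i)) (i : ℕ) :
    Measurable (gammaPt E i) :=
  Finset.measurable_sum _ fun j _ => hE j

lemma map_gammaPt_eq_gammaMeasure [IsFiniteMeasure P] {E : ℕ → Ω → ℝ}
    (hE : ∀ i, Measurable (E i)) (hexp : ∀ i, P.map (E i) = expMeasure 1)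
    (hind : ∀ i, IndepFun (gammaPt E i) (E (i + 1)) P) (i : ℕ) :
    P.map (gammaPt E i) = gammaMeasure (i + 1) 1 := by
  induction i with
  | zero =>
    have hzero : gammaPt E 0 = E 0 := funext fun ω => by simp [gammaPt]
    rw [hzero, hexp 0, expMeasure]
    norm_num
  | succ i ih =>
    have hsucc : gammaPt E (i + 1) = gammaPt E i + E (i + 1) :=
      funext fun ω => Finset.sum_range_succ _ _
    rw [hsucc, (hind i).map_add_eq_map_conv_map (measurable_gammaPt hE i) (hE _), ih, hexp,
      gammaMeasure_conv_expMeasure (by positivity) one_pos]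
    push_cast
    rfl

lemma tsum_lintegral_comp_eq_setLIntegral_Ioi {Γ : ℕ → Ω → ℝ} (hΓ : ∀ i, Measurable (Γ i))
    (hlaw : ∀ i, P.map (Γ i) = gammaMeasure (i + 1) 1) {h : ℝ → ℝ≥0∞} (hh : Measurable h) :
    ∑' i, ∫⁻ ω, h (Γ i ω) ∂P = ∫⁻ s in Ioi 0, h s := by
  have hdens (n : ℕ) : Measurable (gammaPDF (n + 1) 1) :=
    (measurable_gammaPDFReal _ _).ennreal_ofReal
  simp_rw [← lintegral_map hh (hΓ _), hlaw, gammaMeasure,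
    lintegral_withDensity_eq_lintegral_mul _ (hdens _) hh]
  rw [← lintegral_tsum fun n => ((hdens n).mul hh).aemeasurable, setLIntegral_congr Ioi_ae_eq_Ici,
    ← lintegral_indicator measurableSet_Ici]
  refine lintegral_congr fun s => ?_
  simp only [Pi.mul_apply, ENNReal.tsum_mul_right, tsum_gammaPDF_nat_succ_one]
  by_cases hs : s ∈ Ici (0 : ℝ) <;> simp [hs]

end PoissonPoints

lemma setLIntegral_Ioi_comp_div {c : ℝ} (hc : 0 < c) (h : ℝ → ℝ≥0∞) :
    ∫⁻ s in Ioi 0, h (c / s) = ∫⁻ x in Ioi 0, ENNReal.ofReal (c / x ^ 2) * h x := by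
  have himage : (fun x => c / x) '' Ioi 0 = Ioi 0 := by
    refine Subset.antisymm (image_subset_iff.2 fun x hx => div_pos hc hx) fun y hy => ?_
    exact ⟨c / y, div_pos hc hy, div_div_cancel₀ hc.ne'⟩
  have hderiv (x : ℝ) (hx : x ∈ Ioi 0) :
      HasDerivWithinAt (fun x => c / x) (-(c / x ^ 2)) (Ioi 0) x := by
    simpa [div_eq_mul_inv] using ((hasDerivAt_inv (ne_of_gt hx)).const_mul c).hasDerivWithinAt
  have hinj : InjOn (fun x => c / x) (Ioi 0) := fun x _ y _ hxy => by
    simpa [div_div_cancel₀ hc.ne'] using congrArg (c / ·) hxy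
  rw [← himage, lintegral_image_eq_lintegral_abs_deriv_mul measurableSet_Ioi hderiv hinj, himage]
  refine setLIntegral_congr_fun measurableSet_Ioi fun x hx => ?_
  rw [abs_neg, abs_of_pos (by have : (0 : ℝ) < x := hx; positivity), div_div_cancel₀ hc.ne']

section Independence

variable {Ω : Type*} [MeasurableSpace Ω] {P : Measure Ω}

lemma ProbabilityTheory.iIndepFun.indepFun_finsetSum_fst {ι β : Type*} [MeasurableSpace β]
    {F : ι → Ω → ℝ × β} (h : iIndepFun F P) (hF : ∀ j, Measurable (F j)) {S : Finset ι} {k : ι}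
    (hk : k ∉ S) :
    IndepFun (fun ω => ∑ j ∈ S, (F j ω).1) (F k) P := by
  have hφ : Measurable fun v : S → ℝ × β => ∑ j, (v j).1 :=
    Finset.measurable_sum _ fun j _ => measurable_fst.comp (measurable_pi_apply j)
  have hψ : Measurable fun v : ({k} : Finset ι) → ℝ × β => v ⟨k, Finset.mem_singleton_self k⟩ :=
    measurable_pi_apply _
  have := (h.indepFun_finset S {k} (Finset.disjoint_singleton_right.2 hk) hF).comp hφ hψ
  convert this using 1
  · exact funext fun ω => (Finset.sum_coe_sort S fun j => (F j ω).1).symm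
  · rfl

lemma indepFun_gammaPt_of_iIndepFun {β : Type*} [MeasurableSpace β] [Zero β]
    {E : ℕ → Ω → ℝ} {ξ : ℕ → Ω → β} (hE : ∀ i, Measurable (E i)) (hξ : ∀ i, Measurable (ξ i))
    (hindep : iIndepFun (Sum.elim (fun j ω => ((E j ω, 0) : ℝ × β))
      (fun j ω => ((0, ξ j ω) : ℝ × β))) P) (i : ℕ) :
    IndepFun (gammaPt E i) (E (i + 1)) P ∧ IndepFun (gammaPt E i) (ξ i) P := by
  set F := Sum.elim (fun j ω => ((E j ω, 0) : ℝ × β)) (fun j ω => ((0, ξ j ω) : ℝ × β))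
  have hF : ∀ k, Measurable (F k) := by
    rintro (j | j)
    exacts [(hE j).prodMk measurable_const, measurable_const.prodMk (hξ j)]
  have hkey (k : ℕ ⊕ ℕ) (hk : k ∉ (Finset.range (i + 1)).map .inl) :
      IndepFun (gammaPt E i) (F k) P := by
    have := hindep.indepFun_finsetSum_fst hF hk
    simp only [Finset.sum_map, Function.Embedding.inl_apply, F, Sum.elim_inl] at this
    exact this
  exact ⟨(hkey (.inl (i + 1)) (by simp)).comp measurable_id measurable_fst,
    (hkey (.inr i) (by simp)).comp measurable_id measurable_snd⟩

end Independence

lemma summable_abs_of_tsum_ofReal_min_one_abs_ne_top {ι : Type*} {a : ι → ℝ}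
    (h : ∑' i, ENNReal.ofReal (min 1 |a i|) ≠ ⊤) : Summable fun i => |a i| := by
  have hs : Summable fun i => min 1 |a i| :=
    (ENNReal.summable_toReal h).congr fun i => ENNReal.toReal_ofReal (by positivity)
  refine hs.of_norm_bounded_eventually ?_
  filter_upwards [hs.tendsto_cofinite_zero.eventually (gt_mem_nhds one_pos)] with i hi
  rw [Real.norm_eq_abs, abs_abs, min_eq_right]
  by_contra! h1
  exact hi.ne (min_eq_left h1.le)

theorem lintegral_tsum_comp_eval_inv_gammaPt {Ω : Type*} [MeasurableSpace Ω] {P : Measure Ω}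
    [IsFiniteMeasure P] {E : ℕ → Ω → ℝ} {ξ : ℕ → Ω → ℝ≥0 → ℝ}
    (hE : ∀ i, Measurable (E i)) (hξ : ∀ i, Measurable (ξ i))
    (hexp : ∀ i, P.map (E i) = expMeasure 1)
    (hindE : ∀ i, IndepFun (gammaPt E i) (E (i + 1)) P)
    (hindξ : ∀ i, IndepFun (gammaPt E i) (ξ i) P) (hiid : ∀ i, P.map (ξ i) = P.map (ξ 0))
    (hrc : ∀ i, ∀ᵐ ω ∂P, ∀ q, ContinuousWithinAt (ξ i ω) (Ici q) q)
    {g : ℝ → ℝ≥0∞} (hg : Continuous g) {t : ℝ≥0} (ht : 0 < t) :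
    ∫⁻ ω, ∑' i, g (ξ i ω ((gammaPt E i ω).toNNReal⁻¹ * t)) ∂P
      = ∫⁻ ω, (∫⁻ x in Ioi (0 : ℝ), ENNReal.ofReal (t / x ^ 2) * g (ξ 0 ω x.toNNReal)) ∂P := by
  set m : ℝ≥0 → ℝ≥0∞ := fun q => ∫⁻ ω, g (ξ 0 ω q) ∂P
  have hm (i : ℕ) (q : ℝ≥0) : ∫⁻ ω, g (ξ i ω q) ∂P = m q := by
    have hev : Measurable fun f : ℝ≥0 → ℝ => g (f q) := hg.measurable.comp (measurable_pi_apply q)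
    rw [← lintegral_map hev (hξ i), hiid i, lintegral_map hev (hξ 0)]
  have hτ : Measurable fun s : ℝ => s.toNNReal⁻¹ * t := measurable_real_toNNReal.inv.mul_const t
  have hU (i : ℕ) : Measurable fun ω => (gammaPt E i ω).toNNReal⁻¹ * t :=
    hτ.comp (measurable_gammaPt hE i)
  calc ∫⁻ ω, ∑' i, g (ξ i ω ((gammaPt E i ω).toNNReal⁻¹ * t)) ∂P
      = ∑' i, ∫⁻ ω, g (ξ i ω ((gammaPt E i ω).toNNReal⁻¹ * t)) ∂P :=
        lintegral_tsum fun i => aemeasurable_comp_eval hg (hξ i) (hrc i) (hU i)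
    _ = ∑' i, ∫⁻ ω, m ((gammaPt E i ω).toNNReal⁻¹ * t) ∂P := by
        refine tsum_congr fun i => ?_
        rw [lintegral_comp_eval_of_indepFun hg (hξ i) (hrc i) (hU i)
          ((hindξ i).comp hτ measurable_id)]
        simp only [hm]
    _ = ∫⁻ s in Ioi (0 : ℝ), m (s.toNNReal⁻¹ * t) :=
        tsum_lintegral_comp_eq_setLIntegral_Ioi (measurable_gammaPt hE)
          (map_gammaPt_eq_gammaMeasure hE hexp hindE)
          ((measurable_lintegral_comp_eval hg (hξ 0) (hrc 0)).comp hτ)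
    _ = ∫⁻ s in Ioi (0 : ℝ), m ((t / s).toNNReal) := by
        refine setLIntegral_congr_fun measurableSet_Ioi fun s _ => ?_
        rw [Real.toNNReal_div t.coe_nonneg, Real.toNNReal_coe, div_eq_inv_mul]
    _ = ∫⁻ x in Ioi (0 : ℝ), ENNReal.ofReal (t / x ^ 2) * m x.toNNReal :=
        setLIntegral_Ioi_comp_div (NNReal.coe_pos.2 ht) fun x => m x.toNNReal
    _ = ∫⁻ ω, (∫⁻ x in Ioi (0 : ℝ), ENNReal.ofReal (t / x ^ 2) * g (ξ 0 ω x.toNNReal)) ∂P :=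
        lintegral_mul_lintegral_comp_eval_swap hg (hξ 0) (hrc 0) measurable_real_toNNReal
          (by fun_prop)

/-- Let `(εᵢ)` be i.i.d. copies of a random element of `D'₀`, independent of
the points `(Γᵢ)` of a unit-intensity Poisson process on `[0,∞)` (given by i.i.d. rate-one
exponential interarrival times `Eⱼ`). If `E ∫₀^∞ min(1,|ε(t)|) t⁻² dt < ∞`, then for every
`t ≥ 0` the series `∑ᵢ εᵢ(Γᵢ⁻¹ t)` converges absolutely almost surely. -/
theorem statement6 {Ω : Type*} [MeasurableSpace Ω] (P : Measure Ω) [IsProbabilityMeasure P]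
    (E : ℕ → Ω → ℝ) (eps : ℕ → Ω → ℝ≥0 → ℝ)
    (hEmeas : ∀ i, Measurable (E i)) (hepsmeas : ∀ i, Measurable (eps i))
    -- all the random elements `E 0, E 1, …, ε 0, ε 1, …` are jointly independent
    (hindep : iIndepFun (m := fun _ : ℕ ⊕ ℕ => inferInstance)
      (Sum.elim (fun j => fun ω => ((E j ω, 0) : ℝ × (ℝ≥0 → ℝ)))
        (fun j => fun ω => ((0, eps j ω) : ℝ × (ℝ≥0 → ℝ)))) P)
    -- the `E j` are rate-one exponential random variables
    (hexp : ∀ i, ∀ t : ℝ, 0 ≤ t → P {ω | t < E i ω} = ENNReal.ofReal (Real.exp (-t)))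
    -- the `ε i` are identically distributed
    (hiid : ∀ i, Measure.map (eps i) P = Measure.map (eps 0) P)
    -- each `ε i` takes values in `D'₀` a.s.
    (hD : ∀ i, ∀ᵐ ω ∂P, Cadlag (eps i ω) ∧ eps i ω 0 = 0 ∧ eps i ω ≠ 0)
    -- `E ∫₀^∞ min(1, |ε(t)|) t⁻² dt < ∞`
    (hmom : ∫⁻ ω, (∫⁻ t in Set.Ioi (0 : ℝ),
        ENNReal.ofReal (min 1 |eps 0 ω t.toNNReal| / t ^ 2)) ∂P ≠ ⊤) :
    ∀ t : ℝ≥0, ∀ᵐ ω ∂P,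
      Summable fun i : ℕ => |eps i ω (((gammaPt E i ω).toNNReal)⁻¹ * t)| := by
  intro t
  rcases eq_zero_or_pos t with rfl | ht
  · filter_upwards [ae_all_iff.2 hD] with ω hω
    simp [fun i => (hω i).2.1]
  obtain ⟨hindE, hindε⟩ := forall_and.1 (indepFun_gammaPt_of_iIndepFun hEmeas hepsmeas hindep)
  have hlaw (i : ℕ) : P.map (E i) = expMeasure 1 :=
    map_eq_expMeasure_of_tail (hEmeas i) one_pos (by simpa using hexp i)
  have hrc (i : ℕ) : ∀ᵐ ω ∂P, ∀ q, ContinuousWithinAt (eps i ω) (Ici q) q :=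
    (hD i).mono fun ω h => h.1.1
  have hg : Continuous fun x : ℝ => ENNReal.ofReal (min 1 |x|) :=
    ENNReal.continuous_ofReal.comp (continuous_const.min continuous_abs)
  have hpull (f : ℝ≥0 → ℝ) :
      ∫⁻ x in Ioi (0 : ℝ), ENNReal.ofReal (t / x ^ 2) * ENNReal.ofReal (min 1 |f x.toNNReal|)
        = ENNReal.ofReal t *
          ∫⁻ x in Ioi (0 : ℝ), ENNReal.ofReal (min 1 |f x.toNNReal| / x ^ 2) := by
    rw [← lintegral_const_mul' _ _ ENNReal.ofReal_ne_top]
    refine lintegral_congr fun x => ?_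
    rw [← ENNReal.ofReal_mul (by positivity), ← ENNReal.ofReal_mul t.coe_nonneg]
    ring_nf
  have hfin : ∫⁻ ω, ∑' i, ENNReal.ofReal (min 1 |eps i ω ((gammaPt E i ω).toNNReal⁻¹ * t)|) ∂P
      ≠ ⊤ := by
    rw [lintegral_tsum_comp_eval_inv_gammaPt hEmeas hepsmeas hlaw hindE hindε hiid hrc hg ht]
    simp only [hpull]
    rw [lintegral_const_mul' _ _ ENNReal.ofReal_ne_top]
    exact ENNReal.mul_ne_top ENNReal.ofReal_ne_top hmom
  have hmeas (i : ℕ) := aemeasurable_comp_eval hg (hepsmeas i) (hrc i)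
    ((measurable_gammaPt hEmeas i).real_toNNReal.inv.mul_const t)
  filter_upwards [ae_lt_top' (AEMeasurable.tsum hmeas) hfin] with ω hω
  exact summable_abs_of_tsum_ofReal_min_one_abs_ne_top hω.ne
end
end

section
/- Let τ be a [0,∞]-valued random variable such that for every n ≥ 2, the minimum of n i.i.d. copies of τ has the same distribution as n⁻¹τ. Then τ is exponentially distributed in the extended sense: there exists λ ∈ [0,∞] such that P(τ > t) = e^{−λt} for all t > 0. -/
open MeasureTheory Set
open scoped NNReal ENNReal

/-!
Let `f t = P(τ > t)`. Since `min_j τ_j > t` iff every `τ_j > t`, the hypothesis gives the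
functional equation `f (n t) = f t ^ n`. Taking `n`-th roots, `f q = f 1 ^ q` for every positive
rational `q`; as `f` is antitone and `x ↦ f 1 ^ x` is continuous on `(0, ∞)`, this extends to all
`t > 0`. Finally `f 1 ^ t = e^{-λ t}` with `λ = -log f 1`, read as `λ = ∞` when `f 1 = 0`.
-/

theorem AntitoneOn.eq_of_continuousAt_of_forall_rat {α : Type*} [LinearOrder α]
    [TopologicalSpace α] [OrderTopology α] {f g : ℝ → α} (hf : AntitoneOn f (Ioi 0)) {t : ℝ}
    (ht : 0 < t) (hg : ContinuousAt g t) (hfg : ∀ q : ℚ, 0 < q → f q = g q) : f t = g t := by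
  rcases lt_trichotomy (f t) (g t) with hlt | heq | hgt
  · obtain ⟨l, u, ⟨hl, hu⟩, hsub⟩ :=
      mem_nhds_iff_exists_Ioo_subset.1 (hg.eventually (lt_mem_nhds hlt))
    obtain ⟨q, htq, hqu⟩ := exists_rat_btwn hu
    have hq : (0 : ℝ) < q := ht.trans htq
    have hlt' : f t < f q := (hfg q (mod_cast hq)).symm ▸ hsub ⟨hl.trans htq, hqu⟩
    exact absurd (hf ht hq htq.le) hlt'.not_ge
  · exact heq
  · obtain ⟨l, u, ⟨hl, hu⟩, hsub⟩ :=
      mem_nhds_iff_exists_Ioo_subset.1 (hg.eventually (gt_mem_nhds hgt))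
    obtain ⟨q, hlq, hqt⟩ := exists_rat_btwn (max_lt hl ht)
    have hq : (0 : ℝ) < q := (le_max_right l 0).trans_lt hlq
    have hlt' : f q < f t :=
      (hfg q (mod_cast hq)).symm ▸ hsub ⟨(le_max_left l 0).trans_lt hlq, hqt.trans hu⟩
    exact absurd (hf hq ht hqt.le) hlt'.not_ge

section PowerEquation

variable {f : ℝ → ℝ}

theorem apply_rat_eq_apply_one_rpow (hf0 : ∀ t, 0 < t → 0 ≤ f t)
    (hmul : ∀ n : ℕ, 0 < n → ∀ t, 0 < t → f (n * t) = f t ^ n) (q : ℚ) (hq : 0 < q) :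
    f q = f 1 ^ (q : ℝ) := by
  obtain ⟨m, hm⟩ : ∃ m : ℕ, q.num = m := Int.eq_ofNat_of_zero_le (Rat.num_nonneg.2 hq.le)
  have hm0 : 0 < m := by have := Rat.num_pos.2 hq; omega
  have hqd : (q : ℝ) * q.den = m := by exact_mod_cast hm ▸ q.mul_den_eq_num
  have hq' : (0 : ℝ) < q := by exact_mod_cast hq
  refine (pow_left_inj₀ (hf0 _ hq') (Real.rpow_nonneg (hf0 1 one_pos) _) q.den_nz).1 ?_
  calc f q ^ q.den = f (q.den * q) := (hmul _ q.den_pos _ hq').symm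
    _ = f (m * 1) := by rw [mul_comm, hqd, mul_one]
    _ = f 1 ^ m := hmul m hm0 1 one_pos
    _ = (f 1 ^ (q : ℝ)) ^ q.den := by
      rw [← Real.rpow_mul_natCast (hf0 1 one_pos), hqd, Real.rpow_natCast]

theorem apply_eq_apply_one_rpow (hf0 : ∀ t, 0 < t → 0 ≤ f t)
    (hmul : ∀ n : ℕ, 0 < n → ∀ t, 0 < t → f (n * t) = f t ^ n) (hf : AntitoneOn f (Ioi 0))
    {t : ℝ} (ht : 0 < t) : f t = f 1 ^ t :=
  hf.eq_of_continuousAt_of_forall_rat ht (Real.continuousAt_const_rpow' ht.ne')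
    (apply_rat_eq_apply_one_rpow hf0 hmul)

end PowerEquation

theorem exists_ofReal_rpow_eq_ite_exp {c : ℝ} (hc0 : 0 ≤ c) (hc1 : c ≤ 1) :
    ∃ lam : ℝ≥0∞, ∀ t : ℝ, 0 < t → ENNReal.ofReal (c ^ t) =
      if lam = ⊤ then 0 else ENNReal.ofReal (Real.exp (-(lam.toReal * t))) := by
  rcases hc0.eq_or_lt with rfl | hc
  · exact ⟨⊤, fun t ht => by simp [Real.zero_rpow ht.ne']⟩
  · refine ⟨ENNReal.ofReal (-Real.log c), fun t _ => ?_⟩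
    rw [if_neg ENNReal.ofReal_ne_top,
      ENNReal.toReal_ofReal (neg_nonneg.2 (Real.log_nonpos hc0 hc1)), neg_mul, neg_neg,
      Real.rpow_def_of_pos hc]

section Survival

variable {Ω : Type*} [MeasurableSpace Ω] (P : Measure Ω) (τ : Ω → ℝ≥0∞)

theorem measure_pi_lt_iInf {ι : Type*} [Fintype ι] [Nonempty ι] [SigmaFinite P] (a : ℝ≥0∞) :
    Measure.pi (fun _ : ι => P) {ω | a < ⨅ j, τ (ω j)} = P {ω | a < τ ω} ^ Fintype.card ι := by
  have hpi : {ω : ι → Ω | a < ⨅ j, τ (ω j)} = univ.pi fun _ => {x | a < τ x} := by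
    ext ω
    obtain ⟨j, hj⟩ := exists_eq_ciInf_of_finite (f := fun j => τ (ω j))
    simp only [mem_ofPred_eq, mem_pi, mem_univ, true_implies]
    exact ⟨fun h i => h.trans_le (iInf_le _ i), fun h => hj ▸ h j⟩
  rw [hpi, Measure.pi_pi, Finset.prod_const, Finset.card_univ]

theorem measure_lt_natCast_mul_eq_pow [SigmaFinite P] (hτ : Measurable τ) {n : ℕ} (hn : 0 < n)
    (hmin : Measure.map (fun ω : Fin n → Ω => ⨅ j, τ (ω j)) (Measure.pi fun _ : Fin n => P)
        = Measure.map (fun ω => τ ω / (n : ℝ≥0∞)) P) (t : ℝ) :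
    P {ω | ENNReal.ofReal (n * t) < τ ω} = P {ω | ENNReal.ofReal t < τ ω} ^ n := by
  have : NeZero n := ⟨hn.ne'⟩
  have hdiv : {ω | ENNReal.ofReal (n * t) < τ ω} = (fun ω => τ ω / n) ⁻¹' Ioi (.ofReal t) := by
    ext ω
    rw [mem_preimage, mem_Ioi, ENNReal.lt_div_iff_mul_lt (by simp) (by simp), mem_ofPred_eq,
      ENNReal.ofReal_mul (Nat.cast_nonneg n), ENNReal.ofReal_natCast, mul_comm]
  have hmeas : Measurable fun ω : Fin n → Ω => ⨅ j, τ (ω j) :=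
    .iInf fun j => hτ.comp (measurable_pi_apply j)
  rw [hdiv, ← Measure.map_apply (hτ.div_const _) measurableSet_Ioi, ← hmin,
    Measure.map_apply hmeas measurableSet_Ioi]
  exact (measure_pi_lt_iInf P τ _).trans (by rw [Fintype.card_fin])

end Survival

/-- If, for every `n ≥ 2`, the minimum of `n` i.i.d. copies of a
`[0,∞]`-valued random variable `τ` (realized on the product space) has the same distribution
as `τ/n`, then `τ` is exponentially distributed in the extended sense: there is
`λ ∈ [0,∞]` with `P(τ > t) = e^{−λt}` for all `t > 0` (where `e^{−∞t} = 0`). -/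
theorem statement10 {Ω : Type*} [MeasurableSpace Ω] (P : Measure Ω) [IsProbabilityMeasure P]
    (τ : Ω → ℝ≥0∞) (hmeas : Measurable τ)
    (hmin : ∀ n : ℕ, 2 ≤ n →
      Measure.map (fun ω : Fin n → Ω => ⨅ j, τ (ω j)) (Measure.pi fun _ : Fin n => P)
        = Measure.map (fun ω => τ ω / (n : ℝ≥0∞)) P) :
    ∃ lam : ℝ≥0∞, ∀ t : ℝ, 0 < t →
      P {ω | ENNReal.ofReal t < τ ω} =
        if lam = ⊤ then 0 else ENNReal.ofReal (Real.exp (-(lam.toReal * t))) := by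
  set f : ℝ → ℝ := fun t => P.real {ω | ENNReal.ofReal t < τ ω}
  have hanti : Antitone f := fun s t hst =>
    measureReal_mono fun ω h => (ENNReal.ofReal_le_ofReal hst).trans_lt h
  have hmul : ∀ n : ℕ, 0 < n → ∀ t, 0 < t → f (n * t) = f t ^ n := by
    intro n hn t _
    obtain rfl | hn2 := (show 1 ≤ n from hn).eq_or_lt
    · simp
    · simp only [f, measureReal_def, ← ENNReal.toReal_pow,
        measure_lt_natCast_mul_eq_pow P τ hmeas hn (hmin n hn2) t]
  obtain ⟨lam, hlam⟩ := exists_ofReal_rpow_eq_ite_exp (c := f 1) measureReal_nonneg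
    measureReal_le_one
  refine ⟨lam, fun t ht => ?_⟩
  rw [← hlam t ht, ← apply_eq_apply_one_rpow (fun _ _ => measureReal_nonneg) hmul
    (hanti.antitoneOn _) ht, ofReal_measureReal]
end

section
/- If ξ is a time-stable process, then for every λ ∈ ℝ and all s, t ≥ 0, E exp(iλ ξ(s+t)) = E exp(iλ ξ(s)) · E exp(iλ ξ(t)); moreover there exists a function Ψ : ℝ → ℂ such that E exp(iλ ξ(t)) = exp(−t Ψ(λ)) for all t ≥ 0 and λ ∈ ℝ. -/
/-!
Write `φ(t) = E exp(iλ ξ(t))`. Time stability at a single time gives `φ(nt) = φ(t)ⁿ` for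
`n ≥ 2`; at `t = 0` this makes `φ(0)` an idempotent depending continuously on `λ`, hence
`φ(0) = 1`. Stochastic continuity makes `φ` continuous in `t`. The power law makes `φ`
multiplicative on each grid `ℕ/k`, hence everywhere by continuity. Finally a continuous
multiplicative `φ` is an exponential: if `F` is a primitive of `φ` and `F(a) ≠ F(0)`, then
`φ(x) = (F(x + a) - F(x)) / (F(a) - F(0))` is differentiable and satisfies `φ' = kφ`.
-/

open MeasureTheory ProbabilityTheory
open scoped NNReal ENNReal

noncomputable section

/-- Equality of finite-dimensional distributions. -/
def EqFDD {Ω Ω' : Type*} [MeasurableSpace Ω] [MeasurableSpace Ω']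
    (P : Measure Ω) (P' : Measure Ω') (ξ : Ω → ℝ≥0 → ℝ) (η : Ω' → ℝ≥0 → ℝ) : Prop :=
  ∀ (k : ℕ) (t : Fin k → ℝ≥0),
    Measure.map (fun ω i => ξ ω (t i)) P = Measure.map (fun ω i => η ω (t i)) P'

/-- Time stability: for every `n ≥ 2` the sum of `n` i.i.d. copies of `ξ` (realized on the
product space) has the same finite-dimensional distributions as the time-scaled process
`(n∘ξ)(t) = ξ(nt)`. -/
def TimeStable {Ω : Type*} [MeasurableSpace Ω] (P : Measure Ω) (ξ : Ω → ℝ≥0 → ℝ) : Prop :=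
  ∀ n : ℕ, 2 ≤ n →
    EqFDD (Measure.pi fun _ : Fin n => P) P
      (fun ω t => ∑ j, ξ (ω j) t) (fun ω t => ξ ω ((n : ℝ≥0) * t))

/-- Stochastic continuity: `ξ(s) → ξ(t)` in probability as `s → t`. -/
def StochContinuous {Ω : Type*} [MeasurableSpace Ω] (P : Measure Ω) (ξ : Ω → ℝ≥0 → ℝ) : Prop :=
  ∀ t : ℝ≥0, TendstoInMeasure P (fun s ω => ξ ω s) (nhds t) (fun ω => ξ ω t)

open Filter Topology

theorem map_add_of_map_natCast_mul {M : Type*} [Monoid M] [TopologicalSpace M] [ContinuousMul M]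
    [T2Space M] {φ : ℝ≥0 → M} (hφ : Continuous φ) (hpow : ∀ (n : ℕ) t, φ (n * t) = φ t ^ n)
    (s t : ℝ≥0) : φ (s + t) = φ s * φ t := by
  have hgrid : ∀ a b k : ℕ, φ (a / k + b / k) = φ (a / k) * φ (b / k) := by
    intro a b k
    simp only [div_eq_mul_inv, ← add_mul, ← Nat.cast_add, hpow, pow_add]
  have happrox : ∀ x : ℝ≥0, Tendsto (fun k : ℕ => (⌊(x : ℝ) * k⌋₊ : ℝ≥0) / k) atTop (𝓝 x) := by
    intro x
    rw [← NNReal.tendsto_coe]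
    push_cast
    exact (tendsto_nat_floor_mul_div_atTop x.coe_nonneg).comp tendsto_natCast_atTop_atTop
  have hlhs := (hφ.tendsto _).comp ((happrox s).add (happrox t))
  have hrhs := ((hφ.tendsto _).comp (happrox s)).mul ((hφ.tendsto _).comp (happrox t))
  exact tendsto_nhds_unique hlhs (hrhs.congr fun k => (hgrid _ _ _).symm)

theorem exists_pos_intervalIntegral_ne_zero {E : Type*} [NormedAddCommGroup E] [NormedSpace ℝ E]
    [CompleteSpace E] {f : ℝ → E} (hf : Continuous f) (h0 : f 0 ≠ 0) :
    ∃ a > 0, ∫ u in (0 : ℝ)..a, f u ≠ 0 := by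
  have hne := (hf.integral_hasStrictDerivAt 0 0).hasDerivAt.eventually_ne (c := 0) h0
  have hpos : ∀ᶠ a in 𝓝[>] (0 : ℝ), 0 < a ∧ ∫ u in (0 : ℝ)..a, f u ≠ 0 :=
    (eventually_mem_nhdsWithin (s := Set.Ioi 0)).and
      (hne.filter_mono (nhdsWithin_mono _ fun x hx => ne_of_gt hx))
  exact hpos.exists

theorem intervalIntegral_add_eq_mul {ψ : ℝ → ℂ}
    (hψ : ∀ x y, 0 ≤ x → 0 ≤ y → ψ (x + y) = ψ x * ψ y) {a x : ℝ} (ha : 0 ≤ a) (hx : 0 ≤ x) :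
    ∫ u in x..x + a, ψ u = ψ x * ∫ u in (0 : ℝ)..a, ψ u := by
  have hmul : Set.EqOn (fun u => ψ (u + x)) (fun u => ψ x * ψ u) (Set.uIcc 0 a) :=
    fun u hu => (hψ u x (Set.uIcc_of_le ha ▸ hu).1 hx).trans (mul_comm _ _)
  calc ∫ u in x..x + a, ψ u = ∫ u in (0 : ℝ)..a, ψ (u + x) := by
        rw [intervalIntegral.integral_comp_add_right, zero_add, add_comm]
    _ = ψ x * ∫ u in (0 : ℝ)..a, ψ u := by
        rw [intervalIntegral.integral_congr hmul, intervalIntegral.integral_const_mul]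

theorem exists_eq_exp_mul_of_map_add {φ : ℝ≥0 → ℂ} (hφ : Continuous φ) (h0 : φ 0 = 1)
    (hadd : ∀ s t, φ (s + t) = φ s * φ t) : ∃ k : ℂ, ∀ t : ℝ≥0, φ t = Complex.exp (k * t) := by
  set ψ : ℝ → ℂ := fun x => φ x.toNNReal
  have hψ : Continuous ψ := hφ.comp continuous_real_toNNReal
  have hψadd : ∀ x y : ℝ, 0 ≤ x → 0 ≤ y → ψ (x + y) = ψ x * ψ y := fun x y hx hy => by
    simp only [ψ, Real.toNNReal_add hx hy, hadd]
  obtain ⟨a, ha, hFa⟩ := exists_pos_intervalIntegral_ne_zero hψ (by simp [ψ, h0])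
  set F : ℝ → ℂ := fun x => ∫ u in (0 : ℝ)..x, ψ u
  have hF : ∀ x, HasDerivAt F (ψ x) x := fun x => (hψ.integral_hasStrictDerivAt 0 x).hasDerivAt
  set H : ℝ → ℂ := fun x => (F a)⁻¹ * (F (x + a) - F x)
  have hHψ : ∀ x, 0 ≤ x → H x = ψ x := fun x hx => by
    simp only [H, F]
    rw [intervalIntegral.integral_interval_sub_left (hψ.intervalIntegrable _ _)
      (hψ.intervalIntegrable _ _), intervalIntegral_add_eq_mul hψadd ha.le hx]
    field_simp
  have hH : ∀ x, HasDerivAt H ((F a)⁻¹ * (ψ (x + a) - ψ x)) x := fun x =>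
    (((hF (x + a)).comp_add_const x a).sub (hF x)).const_mul _
  set k := (F a)⁻¹ * (ψ a - 1)
  -- on `[0, ∞)` the function `H = ψ` solves `H' = k H`, so `exp (-k x) * H x` is constant there
  set G : ℝ → ℂ := fun x => Complex.exp (-k * x) * H x
  have hG : ∀ x : ℝ, HasDerivAt G (Complex.exp (-k * x) * (-k * 1) * H x
      + Complex.exp (-k * x) * ((F a)⁻¹ * (ψ (x + a) - ψ x))) x := fun x =>
    ((hasDerivAt_id x).ofReal_comp.const_mul (-k)).cexp.mul (hH x)
  have hG0 : ∀ x, 0 ≤ x → HasDerivAt G 0 x := fun x hx => by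
    convert hG x using 1
    rw [hHψ x hx, hψadd x a hx ha.le]
    ring
  refine ⟨k, fun t => ?_⟩
  have hconst := constant_of_has_deriv_right_zero (f := G) (a := 0) (b := t)
    (fun x _ => (hG x).continuousAt.continuousWithinAt)
    (fun x hx => (hG0 x hx.1).hasDerivWithinAt) t ⟨t.2, le_rfl⟩
  simp only [G, hHψ t t.2, hHψ 0 le_rfl, ψ, Real.toNNReal_coe, Complex.ofReal_zero, mul_zero,
    Complex.exp_zero, one_mul, Real.toNNReal_zero, h0] at hconst
  rw [neg_mul, Complex.exp_neg] at hconst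
  exact (inv_mul_eq_one₀ (Complex.exp_ne_zero _)).1 hconst |>.symm

theorem eq_one_of_isIdempotentElem {X M : Type*} [TopologicalSpace X] [PreconnectedSpace X]
    [MonoidWithZero M] [IsCancelMulZero M] [TopologicalSpace M] [T1Space M] {f : X → M}
    (hf : Continuous f) (hidem : ∀ x, IsIdempotentElem (f x)) {x₀ : X} (h₀ : f x₀ = 1) (x : X) :
    f x = 1 := by
  nontriviality M
  have hpre : f ⁻¹' {1} = f ⁻¹' {0}ᶜ := by
    ext y
    rcases IsIdempotentElem.iff_eq_zero_or_one.1 (hidem y) with h | h <;> simp [h]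
  have hclopen : IsClopen (f ⁻¹' {1}) :=
    ⟨isClosed_singleton.preimage hf, hpre ▸ isOpen_compl_singleton.preimage hf⟩
  exact Set.eq_univ_iff_forall.1 (hclopen.eq_univ ⟨x₀, h₀⟩) x

theorem integral_cexp_I_mul_eq_charFun_map {Ω : Type*} [MeasurableSpace Ω] {P : Measure Ω}
    {X : Ω → ℝ} (hX : AEMeasurable X P) (lam : ℝ) :
    ∫ ω, Complex.exp (Complex.I * lam * X ω) ∂P = charFun (P.map X) lam := by
  rw [charFun_apply_real, integral_map hX (by fun_prop)]
  simp only [mul_comm Complex.I, mul_right_comm _ Complex.I]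

theorem charFun_map_sum_pi {Ω ι : Type*} [MeasurableSpace Ω] [Fintype ι] {P : Measure Ω}
    [IsProbabilityMeasure P] {X : Ω → ℝ} (hX : Measurable X) (lam : ℝ) :
    charFun ((Measure.pi fun _ : ι => P).map fun ω => ∑ j, X (ω j)) lam
      = charFun (P.map X) lam ^ Fintype.card ι := by
  have := Measure.isProbabilityMeasure_map (μ := P) hX.aemeasurable
  have hpi : (Measure.pi fun _ : ι => P).map (fun ω j => X (ω j))
      = Measure.pi fun _ : ι => P.map X :=
    Measure.pi_map_pi fun _ => hX.aemeasurable
  rw [← Finset.card_univ, ← Finset.prod_const, ← Finset.prod_apply, ← charFun_map_sum_pi_eq_prod,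
    ← hpi, Measure.map_map (by fun_prop) (by fun_prop)]
  rfl

theorem EqFDD.map_eq {Ω Ω' : Type*} [MeasurableSpace Ω] [MeasurableSpace Ω'] {P : Measure Ω}
    {P' : Measure Ω'} {ξ : Ω → ℝ≥0 → ℝ} {η : Ω' → ℝ≥0 → ℝ} (h : EqFDD P P' ξ η)
    (hξ : ∀ t, Measurable fun ω => ξ ω t) (hη : ∀ t, Measurable fun ω => η ω t) (t : ℝ≥0) :
    P.map (fun ω => ξ ω t) = P'.map (fun ω => η ω t) := by
  have h1 := congrArg (Measure.map fun v : Fin 1 → ℝ => v 0) (h 1 fun _ => t)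
  rwa [Measure.map_map (by fun_prop) (measurable_pi_lambda _ fun _ => hξ t),
    Measure.map_map (by fun_prop) (measurable_pi_lambda _ fun _ => hη t)] at h1

theorem TendstoInMeasure.tendsto_charFun_map {Ω ι E : Type*} [MeasurableSpace Ω] {P : Measure Ω}
    [IsProbabilityMeasure P] [NormedAddCommGroup E] [InnerProductSpace ℝ E] [MeasurableSpace E]
    [BorelSpace E] {l : Filter ι} [l.IsCountablyGenerated] [l.NeBot] {X : ι → Ω → E} {Z : Ω → E}
    (h : TendstoInMeasure P X l Z) (hX : ∀ i, AEMeasurable (X i) P) (u : E) :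
    Tendsto (fun i => charFun (P.map (X i)) u) l (𝓝 (charFun (P.map Z) u)) := by
  have hlaw := (h.tendstoInDistribution hX).tendsto
  simp only [charFun_eq_integral_innerProbChar]
  exact (ProbabilityMeasure.tendsto_iff_forall_integral_rclike_tendsto ℂ).1 hlaw
    (BoundedContinuousFunction.innerProbChar u)

section TimeStable

variable {Ω : Type*} [MeasurableSpace Ω] {P : Measure Ω} [IsProbabilityMeasure P]
  {ξ : Ω → ℝ≥0 → ℝ}

theorem TimeStable.charFun_map_natCast_mul_of_two_le (hts : TimeStable P ξ)
    (hmeas : ∀ t, Measurable fun ω => ξ ω t) {n : ℕ} (hn : 2 ≤ n) (t : ℝ≥0) (lam : ℝ) :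
    charFun (P.map fun ω => ξ ω (n * t)) lam = charFun (P.map fun ω => ξ ω t) lam ^ n := by
  have hsum : ∀ t, Measurable fun ω : Fin n → Ω => ∑ j, ξ (ω j) t := fun t => by fun_prop
  rw [← (hts n hn).map_eq hsum (fun t => hmeas _) t, charFun_map_sum_pi (hmeas t),
    Fintype.card_fin]

theorem TimeStable.charFun_map_zero (hts : TimeStable P ξ)
    (hmeas : ∀ t, Measurable fun ω => ξ ω t) (lam : ℝ) :
    charFun (P.map fun ω => ξ ω 0) lam = 1 := by
  have hidem : ∀ l : ℝ, IsIdempotentElem (charFun (P.map fun ω => ξ ω 0) l) := fun l => by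
    simpa [IsIdempotentElem, ← pow_two] using
      (hts.charFun_map_natCast_mul_of_two_le hmeas le_rfl 0 l).symm
  have := Measure.isProbabilityMeasure_map (μ := P) (hmeas 0).aemeasurable
  exact eq_one_of_isIdempotentElem continuous_charFun hidem (x₀ := 0) (by simp) lam

theorem TimeStable.charFun_map_natCast_mul (hts : TimeStable P ξ)
    (hmeas : ∀ t, Measurable fun ω => ξ ω t) (n : ℕ) (t : ℝ≥0) (lam : ℝ) :
    charFun (P.map fun ω => ξ ω (n * t)) lam = charFun (P.map fun ω => ξ ω t) lam ^ n := by
  match n with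
  | 0 => simpa using hts.charFun_map_zero hmeas lam
  | 1 => simp
  | n + 2 => exact hts.charFun_map_natCast_mul_of_two_le hmeas (by omega) t lam

theorem StochContinuous.continuous_charFun_map (hcont : StochContinuous P ξ)
    (hmeas : ∀ t, Measurable fun ω => ξ ω t) (lam : ℝ) :
    Continuous fun t => charFun (P.map fun ω => ξ ω t) lam :=
  continuous_iff_continuousAt.2 fun t =>
    TendstoInMeasure.tendsto_charFun_map (hcont t) (fun s => (hmeas s).aemeasurable) lam

end TimeStable

/-- If `ξ` is a (stochastically continuous) time-stable process, then its
characteristic functions satisfy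
`E exp(iλ ξ(s+t)) = E exp(iλ ξ(s)) · E exp(iλ ξ(t))`, and there is `Ψ : ℝ → ℂ` with
`E exp(iλ ξ(t)) = exp(−t Ψ(λ))` for all `t ≥ 0`, `λ ∈ ℝ`. -/
theorem statement11 {Ω : Type*} [MeasurableSpace Ω] (P : Measure Ω) [IsProbabilityMeasure P]
    (ξ : Ω → ℝ≥0 → ℝ) (hmeas : ∀ t : ℝ≥0, Measurable fun ω => ξ ω t)
    (hcont : StochContinuous P ξ) (hts : TimeStable P ξ) :
    (∀ (lam : ℝ) (s t : ℝ≥0),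
      ∫ ω, Complex.exp (Complex.I * (lam : ℂ) * (ξ ω (s + t) : ℂ)) ∂P
        = (∫ ω, Complex.exp (Complex.I * (lam : ℂ) * (ξ ω s : ℂ)) ∂P)
          * ∫ ω, Complex.exp (Complex.I * (lam : ℂ) * (ξ ω t : ℂ)) ∂P) ∧
    ∃ Ψ : ℝ → ℂ, ∀ (lam : ℝ) (t : ℝ≥0),
      ∫ ω, Complex.exp (Complex.I * (lam : ℂ) * (ξ ω t : ℂ)) ∂P
        = Complex.exp (-(t : ℝ) * Ψ lam) := by
  simp only [integral_cexp_I_mul_eq_charFun_map (hmeas _).aemeasurable]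
  have hφ := hcont.continuous_charFun_map hmeas
  have hadd : ∀ (lam : ℝ) (s t : ℝ≥0), charFun (P.map fun ω => ξ ω (s + t)) lam
      = charFun (P.map fun ω => ξ ω s) lam * charFun (P.map fun ω => ξ ω t) lam :=
    fun lam => map_add_of_map_natCast_mul (hφ lam) fun n t =>
      hts.charFun_map_natCast_mul hmeas n t lam
  refine ⟨hadd, ?_⟩
  choose k hk using fun lam =>
    exists_eq_exp_mul_of_map_add (hφ lam) (hts.charFun_map_zero hmeas lam) (hadd lam)
  exact ⟨fun lam => -k lam, fun lam t => by rw [hk, neg_mul_neg, mul_comm]⟩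
end
end

section
/- Let ξ be a time-stable process with ξ(t) ≥ 0 almost surely for every t ≥ 0. Then the one-dimensional distributions of ξ are increasing in the stochastic order: for all 0 ≤ s ≤ t and every x ∈ ℝ, P(ξ(s) > x) ≤ P(ξ(t) > x). -/
/-!
By time stability, `ξ(n u)` has the law of a sum of `n` i.i.d. copies of `ξ(u)`. These copies are
nonnegative, so dropping summands only decreases the sum, whence `P(ξ(m u) > x) ≤ P(ξ(n u) > x)`
for `1 ≤ m ≤ n`: the claim holds for `s` on the grid `{m t / n}`. Stochastic continuity implies
convergence in distribution, so by the portmanteau theorem for the open set `(x, ∞)` the map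
`r ↦ P(ξ(r) > x)` is lower semicontinuous, and approximating `s` by grid points finishes the proof.
-/

open MeasureTheory ProbabilityTheory
open scoped NNReal ENNReal

noncomputable section

open Filter Topology

section ProductMeasure

variable {Ω : Type*} [MeasurableSpace Ω] (P : Measure Ω) [IsProbabilityMeasure P]
  {X : Ω → ℝ} (x : ℝ)

lemma pi_measure_lt_sum_le_succ (hX : ∀ᵐ ω ∂P, 0 ≤ X ω) (m : ℕ) :
    (Measure.pi fun _ : Fin m => P) {ω | x < ∑ j, X (ω j)} ≤
      (Measure.pi fun _ : Fin (m + 1) => P) {ω | x < ∑ j, X (ω j)} := by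
  set μ := Measure.pi fun _ : Fin m => P
  have hsucc : (Measure.pi fun _ : Fin (m + 1) => P) {ω | x < ∑ j, X (ω j)} =
      (P.prod μ) {p | x < X p.1 + ∑ j, X (p.2 j)} := by
    rw [← (measurePreserving_piFinSuccAbove (fun _ => P) 0).measure_preimage_equiv]
    simp [Fin.sum_univ_succ, Fin.tail]
  have hsnd : μ {ω | x < ∑ j, X (ω j)} = (P.prod μ) {p | x < ∑ j, X (p.2 j)} := by
    rw [← one_mul (μ _), ← measure_univ (μ := P), ← Measure.prod_prod, Set.univ_prod]
    rfl
  rw [hsucc, hsnd]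
  refine measure_mono_ae ?_
  filter_upwards [Measure.quasiMeasurePreserving_fst.ae hX] with p hp hlt
  exact hlt.trans_le (le_add_of_nonneg_left hp)

lemma monotone_pi_measure_lt_sum (hX : ∀ᵐ ω ∂P, 0 ≤ X ω) :
    Monotone fun m => (Measure.pi fun _ : Fin m => P) {ω | x < ∑ j, X (ω j)} :=
  monotone_nat_of_le_succ (pi_measure_lt_sum_le_succ P x hX)

end ProductMeasure

section TimeStable

variable {Ω : Type*} [MeasurableSpace Ω] {P : Measure Ω} [IsProbabilityMeasure P]
  {ξ : Ω → ℝ≥0 → ℝ}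

lemma TimeStable.map_sum_pi (hts : TimeStable P ξ) (hmeas : ∀ t, Measurable fun ω => ξ ω t)
    {n : ℕ} (hn : n ≠ 0) (u : ℝ≥0) :
    (Measure.pi fun _ : Fin n => P).map (fun ω => ∑ j, ξ (ω j) u) =
      P.map fun ω => ξ ω (n * u) := by
  obtain rfl | hn2 : n = 1 ∨ 2 ≤ n := by omega
  · have h_sum : (fun ω : Fin 1 → Ω => ∑ j, ξ (ω j) u) = (fun ω => ξ ω u) ∘ Function.eval 0 := by
      ext; simp
    rw [h_sum, ← Measure.map_map (hmeas u) (measurable_pi_apply 0),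
      (measurePreserving_eval (fun _ => P) 0).map_eq, Nat.cast_one, one_mul]
  · have h := congrArg (Measure.map fun f : Fin 1 → ℝ => f 0) (hts n hn2 1 fun _ => u)
    dsimp only at h
    rwa [Measure.map_map (by fun_prop) (by fun_prop),
      Measure.map_map (by fun_prop) (by fun_prop)] at h

lemma TimeStable.measure_lt_eq_pi (hts : TimeStable P ξ) (hmeas : ∀ t, Measurable fun ω => ξ ω t)
    {n : ℕ} (hn : n ≠ 0) (u : ℝ≥0) (x : ℝ) :
    P {ω | x < ξ ω (n * u)} = (Measure.pi fun _ : Fin n => P) {ω | x < ∑ j, ξ (ω j) u} := by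
  change P ((fun ω => ξ ω (n * u)) ⁻¹' Set.Ioi x) = _
  rw [← Measure.map_apply (hmeas _) measurableSet_Ioi,
    ← hts.map_sum_pi hmeas hn, Measure.map_apply (by fun_prop) measurableSet_Ioi]
  rfl

lemma TimeStable.measure_lt_nat_mul_mono (hts : TimeStable P ξ)
    (hmeas : ∀ t, Measurable fun ω => ξ ω t) (hpos : ∀ t, ∀ᵐ ω ∂P, 0 ≤ ξ ω t)
    {m n : ℕ} (hm : m ≠ 0) (hmn : m ≤ n) (u : ℝ≥0) (x : ℝ) :
    P {ω | x < ξ ω (m * u)} ≤ P {ω | x < ξ ω (n * u)} := by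
  rw [hts.measure_lt_eq_pi hmeas hm, hts.measure_lt_eq_pi hmeas (by omega)]
  exact monotone_pi_measure_lt_sum P x (hpos u) hmn

end TimeStable

lemma StochContinuous.lowerSemicontinuous_measure_lt {Ω : Type*} [MeasurableSpace Ω]
    {P : Measure Ω} [IsProbabilityMeasure P] {ξ : Ω → ℝ≥0 → ℝ}
    (hcont : StochContinuous P ξ) (hmeas : ∀ t, Measurable fun ω => ξ ω t) (x : ℝ) :
    LowerSemicontinuous fun t => P {ω | x < ξ ω t} := by
  refine lowerSemicontinuous_iff_le_liminf.2 fun t => ?_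
  have h := ((hcont t).tendstoInDistribution fun s => (hmeas s).aemeasurable).tendsto
  have h_open := ProbabilityMeasure.le_liminf_measure_open_of_tendsto h (isOpen_Ioi (a := x))
  simp only [ProbabilityMeasure.coe_mk, Measure.map_apply (hmeas _) measurableSet_Ioi] at h_open
  exact h_open

lemma NNReal.tendsto_max_one_ceil_mul_div {s t : ℝ≥0} (ht : t ≠ 0) :
    Tendsto (fun n : ℕ => (max 1 ⌈n * s / t⌉₊ : ℕ) * (t / n)) atTop (𝓝 s) := by
  have h_upper : Tendsto (fun n : ℕ => s + t / n) atTop (𝓝 s) := by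
    simpa using tendsto_const_nhds.add (tendsto_const_div_atTop_nhds_zero_nat t)
  refine tendsto_of_tendsto_of_tendsto_of_le_of_le' tendsto_const_nhds h_upper ?_ ?_ <;>
    filter_upwards [eventually_ne_atTop 0] with n hn
  · calc s = n * s / t * (t / n) := by field_simp
      _ ≤ _ := by gcongr; exact (Nat.le_ceil _).trans (by simp)
  · calc _ ≤ (n * s / t + 1) * (t / n) := by
          gcongr
          push_cast
          exact max_le le_add_self (Nat.ceil_lt_add_one zero_le).le
      _ = s + t / n := by field_simp

/-- If `ξ` is a (stochastically continuous) time-stable process with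
`ξ(t) ≥ 0` a.s. for every `t`, then its one-dimensional distributions increase in the
stochastic order: `P(ξ(s) > x) ≤ P(ξ(t) > x)` whenever `s ≤ t`. -/
theorem statement12 {Ω : Type*} [MeasurableSpace Ω] (P : Measure Ω) [IsProbabilityMeasure P]
    (ξ : Ω → ℝ≥0 → ℝ) (hmeas : ∀ t : ℝ≥0, Measurable fun ω => ξ ω t)
    (hcont : StochContinuous P ξ) (hts : TimeStable P ξ)
    (hpos : ∀ t : ℝ≥0, ∀ᵐ ω ∂P, 0 ≤ ξ ω t) :
    ∀ s t : ℝ≥0, s ≤ t → ∀ x : ℝ, P {ω | x < ξ ω s} ≤ P {ω | x < ξ ω t} := by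
  intro s t hst x
  obtain rfl | ht := eq_or_ne t 0
  · rw [nonpos_iff_eq_zero.1 hst]
  set m : ℕ → ℕ := fun n => max 1 ⌈n * s / t⌉₊
  have h_grid : ∀ n ≠ 0, P {ω | x < ξ ω (m n * (t / n))} ≤ P {ω | x < ξ ω t} := by
    intro n hn
    have hmn : m n ≤ n := max_le (by omega) <| Nat.ceil_le.2 <| by
      rw [div_le_iff₀ (pos_of_ne_zero ht)]
      gcongr
    simpa [mul_div_cancel₀ t (Nat.cast_ne_zero.2 hn)] using
      hts.measure_lt_nat_mul_mono hmeas hpos (by positivity) hmn (t / n) x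
  by_contra! h_lt
  obtain ⟨n, h_near, hn⟩ := ((NNReal.tendsto_max_one_ceil_mul_div ht).eventually
    (hcont.lowerSemicontinuous_measure_lt hmeas x s _ h_lt) |>.and (eventually_ne_atTop 0)).exists
  exact (h_grid n hn).not_gt h_near
end
end

section
/- Let ξ be a time-stable process with ξ(t) ≥ 0 almost surely for every t ≥ 0, and suppose ξ is non-degenerate in the sense that P(ξ(t₀) > 0) > 0 for some t₀ > 0. Then the supremum of ξ over the nonnegative rationals is almost surely infinite: P(sup_{q ∈ ℚ, q ≥ 0} ξ(q) = ∞) = 1. -/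
/-!
By time stability with `n = 2`, `ξ(2t)` is distributed as the sum of two independent copies
of `ξ(t)`. Hence `P(ξ(2t) > 2a) ≥ P(ξ(t) > a)²`, and, as `ξ ≥ 0`, `P(ξ(2t) ≤ M) ≤ P(ξ(t) ≤ M)²`.
The first inequality, started from `P(ξ(t₀) > δ) > 0`, gives a time `s = 2ᵏt₀` with
`P(ξ(s) ≤ M) < 1`; the second then makes `P(ξ(2ʲs) ≤ M) ≤ P(ξ(s) ≤ M)^(2ʲ)` tend to `0`.
Stochastic continuity passes to rational times: if `ξ ≤ M` on all of `ℚ≥0`, then `ξ(t) ≤ M + 1`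
outside an event of arbitrarily small probability.
-/

open MeasureTheory ProbabilityTheory
open scoped NNReal ENNReal

noncomputable section

lemma NNRat.denseRange_cast_nnreal : DenseRange ((↑) : ℚ≥0 → ℝ≥0) := by
  refine dense_of_exists_between fun a b hab => ?_
  obtain ⟨r, har, hrb⟩ := exists_rat_btwn (NNReal.coe_lt_coe.2 hab)
  lift r to ℚ≥0 using (by exact_mod_cast a.coe_nonneg.trans har.le)
  rw [Rat.cast_nnratCast] at har hrb
  exact ⟨r, ⟨r, rfl⟩, har, hrb⟩

lemma MeasureTheory.Measure.pi_fin_two_setOf_mem_and_mem {Ω : Type*} [MeasurableSpace Ω]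
    (P : Measure Ω) [SigmaFinite P] (A : Set Ω) :
    (Measure.pi fun _ : Fin 2 => P) {ω | ω 0 ∈ A ∧ ω 1 ∈ A} = P A ^ 2 := by
  have hpi : {ω : Fin 2 → Ω | ω 0 ∈ A ∧ ω 1 ∈ A} = Set.univ.pi fun _ => A := by
    ext ω; simp [Set.mem_pi, Fin.forall_fin_two]
  simp [hpi, Measure.pi_pi]

namespace TimeStable

variable {Ω : Type*} [MeasurableSpace Ω] {P : Measure Ω} {ξ : Ω → ℝ≥0 → ℝ}

lemma map_sum_eq_map_mul (hts : TimeStable P ξ) (hmeas : ∀ t, Measurable fun ω => ξ ω t)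
    {n : ℕ} (hn : 2 ≤ n) (t : ℝ≥0) :
    (Measure.pi fun _ : Fin n => P).map (fun ω => ∑ j, ξ (ω j) t) =
      P.map fun ω => ξ ω (n * t) := by
  have hfdd := congrArg (Measure.map fun x : Fin 1 → ℝ => x 0) (hts n hn 1 fun _ => t)
  rwa [Measure.map_map (measurable_pi_apply 0), Measure.map_map (measurable_pi_apply 0)] at hfdd
  · exact measurable_pi_lambda _ fun _ => hmeas _
  · exact measurable_pi_lambda _ fun _ =>
      Finset.measurable_sum _ fun j _ => (hmeas t).comp (measurable_pi_apply j)

lemma measure_two_mul_mem (hts : TimeStable P ξ) (hmeas : ∀ t, Measurable fun ω => ξ ω t)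
    (t : ℝ≥0) {B : Set ℝ} (hB : MeasurableSet B) :
    P {ω | ξ ω (2 * t) ∈ B} =
      (Measure.pi fun _ : Fin 2 => P) {ω | ξ (ω 0) t + ξ (ω 1) t ∈ B} := by
  have hmap := congrArg (· B) (hts.map_sum_eq_map_mul hmeas le_rfl t)
  simp only [Fin.sum_univ_two, Nat.cast_ofNat] at hmap
  rw [Measure.map_apply (by fun_prop) hB, Measure.map_apply (hmeas _) hB] at hmap
  exact hmap.symm


variable [SigmaFinite P]

lemma measure_lt_sq_le (hts : TimeStable P ξ) (hmeas : ∀ t, Measurable fun ω => ξ ω t)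
    (t : ℝ≥0) (a : ℝ) :
    P {ω | a < ξ ω t} ^ 2 ≤ P {ω | 2 * a < ξ ω (2 * t)} := by
  rw [← Measure.pi_fin_two_setOf_mem_and_mem]
  refine (measure_mono fun ω hω => ?_).trans_eq
    (hts.measure_two_mul_mem hmeas t measurableSet_Ioi).symm
  exact show 2 * a < _ by linarith [hω.1.out, hω.2.out]

lemma measure_two_mul_le_le_sq (hts : TimeStable P ξ) (hmeas : ∀ t, Measurable fun ω => ξ ω t)
    (hpos : ∀ t, ∀ᵐ ω ∂P, 0 ≤ ξ ω t) (t : ℝ≥0) (M : ℝ) :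
    P {ω | ξ ω (2 * t) ≤ M} ≤ P {ω | ξ ω t ≤ M} ^ 2 := by
  rw [← Measure.pi_fin_two_setOf_mem_and_mem]
  refine (hts.measure_two_mul_mem hmeas t measurableSet_Iic).trans_le ?_
  have hpos_pi (i : Fin 2) : ∀ᵐ ω ∂(Measure.pi fun _ : Fin 2 => P), 0 ≤ ξ (ω i) t :=
    Measure.tendsto_eval_ae_ae.eventually (p := fun x => 0 ≤ ξ x t) (hpos t)
  refine measure_mono_ae ?_
  filter_upwards [hpos_pi 0, hpos_pi 1] with ω h₀ h₁ (hsum : _ ≤ M)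
  exact ⟨show _ ≤ M by linarith, show _ ≤ M by linarith⟩

lemma measure_le_le_pow_two_pow (hts : TimeStable P ξ) (hmeas : ∀ t, Measurable fun ω => ξ ω t)
    (hpos : ∀ t, ∀ᵐ ω ∂P, 0 ≤ ξ ω t) (t : ℝ≥0) (M : ℝ) (j : ℕ) :
    P {ω | ξ ω (2 ^ j * t) ≤ M} ≤ P {ω | ξ ω t ≤ M} ^ 2 ^ j := by
  induction j with
  | zero => simp
  | succ j ih =>
    calc P {ω | ξ ω (2 ^ (j + 1) * t) ≤ M}
        = P {ω | ξ ω (2 * (2 ^ j * t)) ≤ M} := by rw [pow_succ', mul_assoc]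
      _ ≤ P {ω | ξ ω (2 ^ j * t) ≤ M} ^ 2 := hts.measure_two_mul_le_le_sq hmeas hpos _ M
      _ ≤ (P {ω | ξ ω t ≤ M} ^ 2 ^ j) ^ 2 := by gcongr
      _ = P {ω | ξ ω t ≤ M} ^ 2 ^ (j + 1) := by rw [← pow_mul, pow_succ]

lemma measure_lt_pow_two_pos (hts : TimeStable P ξ) (hmeas : ∀ t, Measurable fun ω => ξ ω t)
    {t : ℝ≥0} {a : ℝ} (h : 0 < P {ω | a < ξ ω t}) (k : ℕ) :
    0 < P {ω | 2 ^ k * a < ξ ω (2 ^ k * t)} := by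
  induction k with
  | zero => simpa using h
  | succ k ih =>
    calc 0 < P {ω | 2 ^ k * a < ξ ω (2 ^ k * t)} ^ 2 := ENNReal.pow_pos ih 2
      _ ≤ P {ω | 2 * (2 ^ k * a) < ξ ω (2 * (2 ^ k * t))} := hts.measure_lt_sq_le hmeas _ _
      _ = P {ω | 2 ^ (k + 1) * a < ξ ω (2 ^ (k + 1) * t)} := by
        simp only [pow_succ', mul_assoc]


lemma iInf_measure_le_eq_zero [IsProbabilityMeasure P] (hts : TimeStable P ξ)
    (hmeas : ∀ t, Measurable fun ω => ξ ω t) (hpos : ∀ t, ∀ᵐ ω ∂P, 0 ≤ ξ ω t) {t₀ : ℝ≥0}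
    (hnd : 0 < P {ω | 0 < ξ ω t₀}) (M : ℝ) :
    ⨅ t, P {ω | ξ ω t ≤ M} = 0 := by
  obtain ⟨n, hn⟩ : ∃ n : ℕ, 0 < P {ω | 1 / (n + 1 : ℝ) < ξ ω t₀} := by
    refine exists_measure_pos_of_not_measure_iUnion_null (hnd.trans_le (measure_mono ?_)).ne'
    exact fun ω (hω : 0 < ξ ω t₀) => Set.mem_iUnion.2 (exists_nat_one_div_lt hω)
  set δ : ℝ := 1 / (n + 1)
  obtain ⟨k, hk⟩ : ∃ k : ℕ, M < 2 ^ k * δ := by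
    obtain ⟨k, hk⟩ := pow_unbounded_of_one_lt (M / δ) one_lt_two
    exact ⟨k, (div_lt_iff₀ (by positivity)).1 hk⟩
  set s := 2 ^ k * t₀
  have hlarge := hts.measure_lt_pow_two_pos hmeas hn k
  have hsmall : P {ω | ξ ω s ≤ M} < 1 := calc
    P {ω | ξ ω s ≤ M} ≤ P {ω | 2 ^ k * δ < ξ ω s}ᶜ :=
      measure_mono fun ω (hω : ξ ω s ≤ M) (h : _ < ξ ω s) => by linarith
    _ = 1 - P {ω | 2 ^ k * δ < ξ ω s} :=
      prob_compl_eq_one_sub (measurableSet_lt measurable_const (hmeas s))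
    _ < 1 := ENNReal.sub_lt_self ENNReal.one_ne_top one_ne_zero hlarge.ne'
  have hdecay : Filter.Tendsto (fun j : ℕ => P {ω | ξ ω s ≤ M} ^ 2 ^ j) Filter.atTop (nhds 0) :=
    (ENNReal.tendsto_pow_atTop_nhds_zero_of_lt_one hsmall).comp
      (tendsto_pow_atTop_atTop_of_one_lt one_lt_two)
  exact nonpos_iff_eq_zero.1 (ge_of_tendsto' hdecay fun j =>
    iInf_le_of_le (2 ^ j * s) (hts.measure_le_le_pow_two_pow hmeas hpos s M j))

end TimeStable

lemma StochContinuous.measure_forall_rat_le_le {Ω : Type*} [MeasurableSpace Ω] {P : Measure Ω}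
    {ξ : Ω → ℝ≥0 → ℝ} (hcont : StochContinuous P ξ) (M : ℝ) (t : ℝ≥0) :
    P {ω | ∀ q : ℚ≥0, ξ ω q ≤ M} ≤ P {ω | ξ ω t ≤ M + 1} := by
  refine ENNReal.le_of_forall_pos_le_add fun ε hε _ => ?_
  have hnear : ∀ᶠ s in nhds t, P {ω | 1 ≤ edist (ξ ω s) (ξ ω t)} < ε :=
    (hcont t 1 one_pos).eventually (gt_mem_nhds (ENNReal.coe_pos.2 hε))
  obtain ⟨_, hq, q, rfl⟩ := mem_closure_iff_nhds.1 (NNRat.denseRange_cast_nnreal t) _ hnear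
  have hcover : {ω | ∀ q : ℚ≥0, ξ ω q ≤ M} ⊆
      {ω | ξ ω t ≤ M + 1} ∪ {ω | 1 ≤ edist (ξ ω q) (ξ ω t)} := by
    refine fun ω hω => or_iff_not_imp_right.2 fun hfar => ?_
    rw [Set.mem_ofPred_eq, not_le, ← ENNReal.ofReal_one, edist_lt_ofReal, Real.dist_eq] at hfar
    exact show ξ ω t ≤ M + 1 by linarith [(abs_lt.1 hfar).1, hω q]
  calc P {ω | ∀ q : ℚ≥0, ξ ω q ≤ M}
      ≤ P {ω | ξ ω t ≤ M + 1} + P {ω | 1 ≤ edist (ξ ω q) (ξ ω t)} :=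
        (measure_mono hcover).trans (measure_union_le _ _)
    _ ≤ P {ω | ξ ω t ≤ M + 1} + ε := by gcongr; exact hq.out.le

/-- If `ξ` is a (stochastically continuous) time-stable process with
`ξ(t) ≥ 0` a.s. for every `t`, and `P(ξ(t₀) > 0) > 0` for some `t₀ > 0`, then the supremum
of `ξ` over the nonnegative rationals is a.s. infinite (i.e. a.s. unbounded above). -/
theorem statement13 {Ω : Type*} [MeasurableSpace Ω] (P : Measure Ω) [IsProbabilityMeasure P]
    (ξ : Ω → ℝ≥0 → ℝ) (hmeas : ∀ t : ℝ≥0, Measurable fun ω => ξ ω t)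
    (hcont : StochContinuous P ξ) (hts : TimeStable P ξ)
    (hpos : ∀ t : ℝ≥0, ∀ᵐ ω ∂P, 0 ≤ ξ ω t)
    (hnd : ∃ t₀ : ℝ≥0, 0 < t₀ ∧ 0 < P {ω | 0 < ξ ω t₀}) :
    P {ω | ¬ BddAbove (Set.range fun q : ℚ≥0 => ξ ω (q : ℝ≥0))} = 1 := by
  obtain ⟨t₀, -, ht₀⟩ := hnd
  have hbounded_by (M : ℕ) : P {ω | ∀ q : ℚ≥0, ξ ω q ≤ M} = 0 :=
    nonpos_iff_eq_zero.1 <| (le_iInf fun t => hcont.measure_forall_rat_le_le M t).trans_eq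
      (hts.iInf_measure_le_eq_zero hmeas hpos ht₀ (M + 1))
  have hbounded : P {ω | BddAbove (Set.range fun q : ℚ≥0 => ξ ω q)} = 0 := by
    refine measure_mono_null (fun ω ⟨b, hb⟩ => ?_) (measure_iUnion_null hbounded_by)
    obtain ⟨M, hM⟩ := exists_nat_ge b
    exact Set.mem_iUnion.2 ⟨M, fun q => (hb ⟨q, rfl⟩).trans hM⟩
  rw [← measure_univ (μ := P)]
  exact measure_congr (ae_eq_univ.2 (by simpa [Set.compl_ofPred] using hbounded))
end
end

section
/- Let ξ be a time-stable process, let c₁,…,c_m ∈ ℝ and s₁,…,s_m ≥ 0. Then the process η(t) = ∑_{i=1}^m cᵢ ξ(t sᵢ), t ≥ 0, is time-stable: η is stochastically continuous and for every n ≥ 2 the sum of n independent copies of η has the same finite-dimensional distributions as n∘η. -/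
open MeasureTheory ProbabilityTheory
open scoped NNReal ENNReal

noncomputable section

/-!
At finitely many times, `η` is a fixed linear image of `ξ` at finitely many rescaled times.
Equality of finite-dimensional laws survives pushing forward by a measurable map, so the
time-stability identity of `ξ` passes to `η` once the two finite sums are exchanged and
`n (t s) = (n t) s` is used. Convergence in probability survives collecting finitely many
coordinates into a vector and applying a Lipschitz (here linear) map, which gives stochastic
continuity.
-/

section TendstoInMeasure

variable {Ω ι : Type*} [MeasurableSpace Ω] {P : Measure Ω} {l : Filter ι}

theorem tendstoInMeasure_pi {J : Type*} [Fintype J] {X : J → Type*}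
    [∀ j, PseudoEMetricSpace (X j)] {f : ∀ j, ι → Ω → X j} {F : ∀ j, Ω → X j}
    (hf : ∀ j, TendstoInMeasure P (f j) l (F j)) :
    TendstoInMeasure P (fun i ω j => f j i ω) l (fun ω j => F j ω) := by
  intro ε hε
  have hsub : ∀ i, {ω | ε ≤ edist (fun j => f j i ω) (fun j => F j ω)}
      ⊆ ⋃ j, {ω | ε ≤ edist (f j i ω) (F j ω)} := by
    intro i ω (hω : ε ≤ _)
    rw [edist_pi_def] at hω
    obtain ⟨j, -, hj⟩ := (Finset.le_sup_iff hε).1 hω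
    exact Set.mem_iUnion.2 ⟨j, hj⟩
  refine tendsto_of_tendsto_of_tendsto_of_le_of_le tendsto_const_nhds
    (by simpa using tendsto_finsetSum Finset.univ fun j _ => hf j ε hε) (fun _ => zero_le)
    fun i => (measure_mono (hsub i)).trans (measure_iUnion_fintype_le P _)

theorem LipschitzWith.comp_tendstoInMeasure {Y Z : Type*} [PseudoEMetricSpace Y]
    [PseudoEMetricSpace Z] {K : ℝ≥0} {φ : Y → Z} (hφ : LipschitzWith K φ)
    {f : ι → Ω → Y} {F : Ω → Y} (hf : TendstoInMeasure P f l F) :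
    TendstoInMeasure P (fun i ω => φ (f i ω)) l (fun ω => φ (F ω)) := by
  intro ε hε
  refine tendsto_of_tendsto_of_tendsto_of_le_of_le tendsto_const_nhds
    (hf (ε / K) (ENNReal.div_pos hε.ne' ENNReal.coe_ne_top)) (fun _ => zero_le)
    fun i => measure_mono fun ω (hω : ε ≤ _) => ?_
  exact ENNReal.div_le_of_le_mul' (hω.trans (hφ _ _))

end TendstoInMeasure

theorem StochContinuous.sum_mul_comp {Ω ι : Type*} [MeasurableSpace Ω] [Fintype ι]
    {P : Measure Ω} {ξ : Ω → ℝ≥0 → ℝ} (hξ : StochContinuous P ξ) (c : ι → ℝ) (s : ι → ℝ≥0) :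
    StochContinuous P (fun ω t => ∑ i, c i * ξ ω (t * s i)) := by
  intro t
  let L : (ι → ℝ) →L[ℝ] ℝ := ∑ i, c i • ContinuousLinearMap.proj i
  have hL : ∀ x, L x = ∑ i, c i * x i := fun x => by simp [L]
  have h := L.lipschitz.comp_tendstoInMeasure (tendstoInMeasure_pi fun i =>
    (hξ (t * s i)).comp (Filter.tendsto_id.mul_const (s i)))
  simpa only [hL, Function.comp_apply, id] using h

theorem EqFDD.map_eq_of_finite {Ω Ω' J : Type*} [MeasurableSpace Ω] [MeasurableSpace Ω']
    [Finite J] {P : Measure Ω} {P' : Measure Ω'} {ξ : Ω → ℝ≥0 → ℝ} {η : Ω' → ℝ≥0 → ℝ}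
    (h : EqFDD P P' ξ η) (hξ : ∀ t, Measurable fun ω => ξ ω t)
    (hη : ∀ t, Measurable fun ω => η ω t) (t : J → ℝ≥0) :
    Measure.map (fun ω j => ξ ω (t j)) P = Measure.map (fun ω j => η ω (t j)) P' := by
  obtain ⟨K, ⟨e⟩⟩ := Finite.exists_equiv_fin J
  let reindex : (Fin K → ℝ) → J → ℝ := fun x j => x (e j)
  have hreindex : Measurable reindex := measurable_pi_lambda _ fun j => measurable_pi_apply _
  have hlaw := congrArg (Measure.map reindex) (h K fun q => t (e.symm q))
  rw [Measure.map_map hreindex (measurable_pi_lambda _ fun q => hξ _),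
    Measure.map_map hreindex (measurable_pi_lambda _ fun q => hη _)] at hlaw
  simpa [reindex, Function.comp_def] using hlaw

theorem EqFDD.sum_mul_comp {Ω Ω' ι : Type*} [MeasurableSpace Ω] [MeasurableSpace Ω']
    [Fintype ι] {P : Measure Ω} {P' : Measure Ω'} {ξ : Ω → ℝ≥0 → ℝ} {η : Ω' → ℝ≥0 → ℝ}
    (h : EqFDD P P' ξ η) (hξ : ∀ t, Measurable fun ω => ξ ω t)
    (hη : ∀ t, Measurable fun ω => η ω t) (c : ι → ℝ) (s : ι → ℝ≥0) :
    EqFDD P P' (fun ω t => ∑ i, c i * ξ ω (t * s i)) (fun ω t => ∑ i, c i * η ω (t * s i)) := by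
  intro k t
  let g : (Fin k × ι → ℝ) → Fin k → ℝ := fun x q => ∑ i, c i * x (q, i)
  have hg : Measurable g := measurable_pi_lambda _ fun q =>
    Finset.measurable_sum _ fun i _ => measurable_const.mul (measurable_pi_apply _)
  have hlaw := congrArg (Measure.map g)
    (h.map_eq_of_finite hξ hη fun p : Fin k × ι => t p.1 * s p.2)
  rwa [Measure.map_map hg (measurable_pi_lambda _ fun _ => hξ _),
    Measure.map_map hg (measurable_pi_lambda _ fun _ => hη _)] at hlaw

theorem TimeStable.sum_mul_comp {Ω ι : Type*} [MeasurableSpace Ω] [Fintype ι]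
    {P : Measure Ω} {ξ : Ω → ℝ≥0 → ℝ} (hξ : TimeStable P ξ)
    (hmeas : ∀ t, Measurable fun ω => ξ ω t) (c : ι → ℝ) (s : ι → ℝ≥0) :
    TimeStable P (fun ω t => ∑ i, c i * ξ ω (t * s i)) := by
  intro n hn
  have h := (hξ n hn).sum_mul_comp
    (fun t => Finset.measurable_sum _ fun j _ => (hmeas t).comp (measurable_pi_apply j))
    (fun t => hmeas _) c s
  simp only [EqFDD, Finset.mul_sum, mul_assoc] at h ⊢
  simpa only [Finset.sum_comm (γ := Fin n)] using h

theorem statement15_general {Ω : Type*} [MeasurableSpace Ω] (P : Measure Ω)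
    (ξ : Ω → ℝ≥0 → ℝ) (hmeas : ∀ t : ℝ≥0, Measurable fun ω => ξ ω t)
    (hcont : StochContinuous P ξ) (hts : TimeStable P ξ)
    (m : ℕ) (c : Fin m → ℝ) (s : Fin m → ℝ≥0) :
    StochContinuous P (fun ω t => ∑ i, c i * ξ ω (t * s i)) ∧
    TimeStable P (fun ω t => ∑ i, c i * ξ ω (t * s i)) :=
  ⟨hcont.sum_mul_comp c s, hts.sum_mul_comp hmeas c s⟩

/-- If `ξ` is a (stochastically continuous) time-stable process,
`c₁,…,c_m ∈ ℝ` and `s₁,…,s_m ≥ 0`, then `η(t) = ∑ᵢ cᵢ ξ(t sᵢ)` is time-stable: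
it is stochastically continuous and satisfies the time-stability identity. -/
theorem statement15 {Ω : Type*} [MeasurableSpace Ω] (P : Measure Ω) [IsProbabilityMeasure P]
    (ξ : Ω → ℝ≥0 → ℝ) (hmeas : ∀ t : ℝ≥0, Measurable fun ω => ξ ω t)
    (hcont : StochContinuous P ξ) (hts : TimeStable P ξ)
    (m : ℕ) (c : Fin m → ℝ) (s : Fin m → ℝ≥0) :
    StochContinuous P (fun ω t => ∑ i, c i * ξ ω (t * s i)) ∧
    TimeStable P (fun ω t => ∑ i, c i * ξ ω (t * s i)) :=
  statement15_general P ξ hmeas hcont hts m c s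
end
end
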